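/- arXiv:2304.11494 — 9 statements merged into one kernel-verified Lean document; each statement's English description precedes it below -/
import Mathlib

section
/- For a linear order on a finite set X with k elements, there are exactly 2^(k-1) linear orders (preferences) on X that are single-peaked with respect to that linear order. -/
/-- `r` is a (strict) preference, i.e., a strict total order. -/
def IsPref {X : Type*} (r : X → X → Prop) : Prop := IsStrictTotalOrder X r

/-- `x` is the top (most preferred) element of `r`. -/
def TopOf {X : Type*} (r : X → X → Prop) (x : X) : Prop := ∀ y, y ≠ x → r x y

/-- `a` lies on the (unique) path from `x` to `y` in `G`. -/
def OnPath {X : Type*} (G : SimpleGraph X) (a x y : X) : Prop :=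
  ∀ p : G.Walk x y, p.IsPath → a ∈ p.support

/-- Single-peakedness with respect to a tree `G`. -/
def SPTree {X : Type*} (G : SimpleGraph X) (r : X → X → Prop) : Prop :=
  ∀ t a b, TopOf r t → OnPath G a t b → a = b ∨ r a b

/-- Classical single-peakedness with respect to a strict linear order `lt`. -/
def SPLine {X : Type*} (lt r : X → X → Prop) : Prop :=
  ∀ t x y, TopOf r t → (((x = t ∨ lt t x) ∧ lt x y) ∨ (lt y x ∧ (x = t ∨ lt x t))) → r x y

/-- Richness: every alternative is the top of some admissible preference. -/
def Rich {X : Type*} (D : Set (X → X → Prop)) : Prop := ∀ x, ∃ P ∈ D, TopOf P x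

/-- Top dominance property. -/
def TD {X : Type*} (D : Set (X → X → Prop)) : Prop :=
  ∀ x y z : X, (∃ P ∈ D, P x y ∧ P y z) → ¬ ∃ P ∈ D, P x z ∧ P z y

/-- Rotation property. -/
def Rotation {X : Type*} (D : Set (X → X → Prop)) : Prop :=
  ∀ x y z t : X, (∃ P ∈ D, P x y ∧ P y z ∧ P z t) → ¬ ∃ P ∈ D, P z x ∧ P x t

/-- `G` is a path graph (linear tree) on `k` vertices. -/
def IsPathG {X : Type*} (G : SimpleGraph X) (k : ℕ) : Prop :=
  ∃ e : X ≃ Fin k, ∀ a b, G.Adj a b ↔ ((e a : ℕ) + 1 = e b ∨ (e b : ℕ) + 1 = e a)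

/-- `G` is a star graph: some center adjacent to all other vertices, no other edges. -/
def IsStarG {X : Type*} (G : SimpleGraph X) : Prop :=
  ∃ c, ∀ a b, G.Adj a b ↔ a ≠ b ∧ (a = c ∨ b = c)

/-- A preference relation over the `n` agents of the opposite side. -/
abbrev PrefRel (n : ℕ) := Fin n → Fin n → Prop

/-- A preference profile: one preference (over women) per man, one (over men) per woman. -/
abbrev Profile (n : ℕ) := (Fin n → PrefRel n) × (Fin n → PrefRel n)

/-- Membership in the anonymous product domain with men's set `Dm` and women's set `Dw`. -/
def InDomain {n : ℕ} (Dm Dw : Set (PrefRel n)) (p : Profile n) : Prop :=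
  (∀ m, p.1 m ∈ Dm) ∧ (∀ w, p.2 w ∈ Dw)

/-- Pair `(m, w)` blocks matching `μ` at profile `p`. -/
def Blocks {n : ℕ} (p : Profile n) (μ : Fin n ≃ Fin n) (m w : Fin n) : Prop :=
  p.1 m w (μ m) ∧ p.2 w m (μ.symm w)

/-- Matching `μ` is stable at profile `p`. -/
def StableAt {n : ℕ} (p : Profile n) (μ : Fin n ≃ Fin n) : Prop := ∀ m w, ¬ Blocks p μ m w

/-- The matching rule `φ` is stable on the domain. -/
def StableRule {n : ℕ} (Dm Dw : Set (PrefRel n)) (φ : Profile n → (Fin n ≃ Fin n)) : Prop :=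
  ∀ p, InDomain Dm Dw p → StableAt p (φ p)

/-- Strategy-proofness on the domain: no unilateral in-domain misreport gives a strictly
better match. -/
def SP {n : ℕ} (Dm Dw : Set (PrefRel n)) (φ : Profile n → (Fin n ≃ Fin n)) : Prop :=
  ∀ p, InDomain Dm Dw p →
    (∀ m P', P' ∈ Dm → ¬ p.1 m (φ (Function.update p.1 m P', p.2) m) (φ p m)) ∧
    (∀ w P', P' ∈ Dw → ¬ p.2 w ((φ (p.1, Function.update p.2 w P')).symm w) ((φ p).symm w))

/-- Non-bossiness: a unilateral report change leaving one's own match unchanged leaves the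
whole matching unchanged. -/
def NonBossy {n : ℕ} (Dm Dw : Set (PrefRel n)) (φ : Profile n → (Fin n ≃ Fin n)) : Prop :=
  ∀ p, InDomain Dm Dw p →
    (∀ m P', P' ∈ Dm → φ (Function.update p.1 m P', p.2) m = φ p m →
       φ (Function.update p.1 m P', p.2) = φ p) ∧
    (∀ w P', P' ∈ Dw → (φ (p.1, Function.update p.2 w P')).symm w = (φ p).symm w →
       φ (p.1, Function.update p.2 w P') = φ p)

/-- Man `m` is weakly better off under `μ'` than under `μ` (true preferences from `p`). -/
def MWeakBetter {n : ℕ} (p : Profile n) (μ μ' : Fin n ≃ Fin n) (m : Fin n) : Prop :=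
  μ' m = μ m ∨ p.1 m (μ' m) (μ m)

/-- Woman `w` is weakly better off under `μ'` than under `μ`. -/
def WWeakBetter {n : ℕ} (p : Profile n) (μ μ' : Fin n ≃ Fin n) (w : Fin n) : Prop :=
  μ'.symm w = μ.symm w ∨ p.2 w (μ'.symm w) (μ.symm w)

/-- Group strategy-proofness on the domain. -/
def GSP {n : ℕ} (Dm Dw : Set (PrefRel n)) (φ : Profile n → (Fin n ≃ Fin n)) : Prop :=
  ∀ p, InDomain Dm Dw p →
    ¬ ∃ (p' : Profile n) (S : Set (Fin n ⊕ Fin n)),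
      InDomain Dm Dw p' ∧
      (∀ m, Sum.inl m ∉ S → p'.1 m = p.1 m) ∧
      (∀ w, Sum.inr w ∉ S → p'.2 w = p.2 w) ∧
      (∀ m, Sum.inl m ∈ S → MWeakBetter p (φ p) (φ p') m) ∧
      (∀ w, Sum.inr w ∈ S → WWeakBetter p (φ p) (φ p') w) ∧
      ((∃ m, Sum.inl m ∈ S ∧ p.1 m (φ p' m) (φ p m)) ∨
       (∃ w, Sum.inr w ∈ S ∧ p.2 w ((φ p').symm w) ((φ p).symm w)))


namespace SP0

variable {X Y : Type*}


variable {X Y : Type*}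

def WorstOf (r : X → X → Prop) (w : X) : Prop := ∀ y, y ≠ w → r y w

theorem pref_asymm {r : X → X → Prop} (h : IsPref r) {a b : X} (hab : r a b) : ¬ r b a := by
  haveI : IsStrictTotalOrder X r := h
  exact asymm_of r hab

theorem top_exists [Finite X] [Nonempty X] {r : X → X → Prop} (h : IsPref r) : ∃ t, TopOf r t := by
  haveI : IsStrictTotalOrder X r := h
  letI : DecidableRel r := Classical.decRel r
  letI : LinearOrder X := linearOrderOfSTO r
  obtain ⟨t, ht⟩ := Finite.exists_min (id : X → X)
  exact ⟨t, fun y hy => lt_of_le_of_ne (ht y) (Ne.symm hy)⟩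

theorem worst_exists [Finite X] [Nonempty X] {r : X → X → Prop} (h : IsPref r) :
    ∃ w, WorstOf r w := by
  haveI : IsStrictTotalOrder X r := h
  letI : DecidableRel r := Classical.decRel r
  letI : LinearOrder X := linearOrderOfSTO r
  obtain ⟨w, hw⟩ := Finite.exists_max (id : X → X)
  exact ⟨w, fun y hy => lt_of_le_of_ne (hw y) hy⟩

/-! ### Transport along equivalences -/

def relMap (e : X ≃ Y) (r : X → X → Prop) : Y → Y → Prop := fun a b => r (e.symm a) (e.symm b)

theorem relMap_inj (e : X ≃ Y) : Function.Injective (relMap (X := X) e) := by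
  intro r s h
  funext a b
  have := congrFun (congrFun h (e a)) (e b)
  simpa [relMap] using this

theorem relMap_relMap_symm (e : X ≃ Y) (s : Y → Y → Prop) : relMap e (relMap e.symm s) = s := by
  funext a b; simp [relMap]

theorem relMap_symm_relMap (e : X ≃ Y) (r : X → X → Prop) : relMap e.symm (relMap e r) = r := by
  funext a b; simp [relMap]

theorem ispref_relMap {r : X → X → Prop} (e : X ≃ Y) (h : IsPref r) : IsPref (relMap e r) := by
  haveI : IsStrictTotalOrder X r := h
  refine { trichotomous := ?_, irrefl := ?_, trans := ?_ }
  · intro a b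
    rcases trichotomous_of r (e.symm a) (e.symm b) with h1 | h1 | h1
    · exact fun h2 _ => absurd h1 h2
    · exact fun _ _ => e.symm.injective h1
    · exact fun _ h2 => absurd h1 h2
  · intro a
    exact irrefl_of r (e.symm a)
  · intro a b c h1 h2
    exact trans_of r h1 h2

theorem spline_relMap {lt r : X → X → Prop} (e : X ≃ Y) (h : SPLine lt r) :
    SPLine (relMap e lt) (relMap e r) := by
  intro t x y htop hc
  refine h (e.symm t) (e.symm x) (e.symm y) ?_ ?_
  · intro z hz
    have := htop (e z) (fun hco => hz (by rw [← hco, Equiv.symm_apply_apply]))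
    simpa [relMap] using this
  · rcases hc with ⟨h1, h2⟩ | ⟨h1, h2⟩
    · exact Or.inl ⟨h1.imp (fun hx => by rw [hx]) id, h2⟩
    · exact Or.inr ⟨h1, h2.imp (fun hx => by rw [hx]) id⟩

def SPSet (lt : X → X → Prop) : Set (X → X → Prop) := {r | IsPref r ∧ SPLine lt r}

theorem relMap_image_SPSet (e : X ≃ Y) (lt : X → X → Prop) :
    relMap e '' SPSet lt = SPSet (relMap e lt) := by
  apply Set.Subset.antisymm
  · rintro _ ⟨r, ⟨h1, h2⟩, rfl⟩
    exact ⟨ispref_relMap e h1, spline_relMap e h2⟩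
  · rintro s ⟨h1, h2⟩
    refine ⟨relMap e.symm s, ⟨ispref_relMap e.symm h1, ?_⟩, relMap_relMap_symm e s⟩
    have h3 := spline_relMap e.symm h2
    rwa [show relMap e.symm (relMap e lt) = lt from relMap_symm_relMap e lt] at h3

theorem ncard_SPSet_eq (e : X ≃ Y) (lt : X → X → Prop) :
    (SPSet (relMap e lt)).ncard = (SPSet lt).ncard := by
  rw [← relMap_image_SPSet, Set.ncard_image_of_injective _ (relMap_inj e)]

theorem spline_flip {lt r : X → X → Prop} (h : SPLine lt r) : SPLine (fun a b => lt b a) r := by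
  intro t x y htop hc
  apply h t x y htop
  tauto

theorem worst_endpoint {k : ℕ} {r : Fin (k + 1) → Fin (k + 1) → Prop}
    (h1 : IsPref r) (h2 : SPLine (· < ·) r) {w : Fin (k + 1)} (hw : WorstOf r w) :
    w = 0 ∨ w = Fin.last k := by
  obtain ⟨t, ht⟩ := top_exists h1
  rcases le_or_gt w t with hle | hlt
  · left
    by_contra h0
    have hx : r w 0 := h2 t w 0 ht (Or.inr ⟨Fin.pos_of_ne_zero h0, hle.lt_or_eq.symm⟩)
    exact pref_asymm h1 hx (hw 0 (Ne.symm h0))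
  · right
    by_contra h0
    have hwl : w < Fin.last k := lt_of_le_of_ne (Fin.le_last w) h0
    have hx : r w (Fin.last k) := h2 t w (Fin.last k) ht (Or.inl ⟨Or.inr hlt, hwl⟩)
    exact pref_asymm h1 hx (hw _ hwl.ne')

def ext0 {k : ℕ} (r : Fin k → Fin k → Prop) : Fin (k + 1) → Fin (k + 1) → Prop :=
  fun a b => (b = 0 ∧ a ≠ 0) ∨ ∃ a' b', a = a'.succ ∧ b = b'.succ ∧ r a' b'

def res0 {k : ℕ} (r : Fin (k + 1) → Fin (k + 1) → Prop) : Fin k → Fin k → Prop :=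
  fun a b => r a.succ b.succ

theorem ext0_succ_succ {k : ℕ} {r : Fin k → Fin k → Prop} {a b : Fin k} :
    ext0 r a.succ b.succ ↔ r a b := by
  constructor
  · rintro (⟨h1, -⟩ | ⟨a', b', ha, hb, h⟩)
    · exact absurd h1 (Fin.succ_ne_zero b)
    · obtain rfl : a = a' := Fin.succ_injective _ ha
      obtain rfl : b = b' := Fin.succ_injective _ hb
      exact h
  · intro h; exact Or.inr ⟨a, b, rfl, rfl, h⟩

theorem ext0_zero_right {k : ℕ} {r : Fin k → Fin k → Prop} {a : Fin (k + 1)} :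
    ext0 r a 0 ↔ a ≠ 0 := by
  constructor
  · rintro (⟨-, h⟩ | ⟨a', b', -, hb, -⟩)
    · exact h
    · exact absurd hb.symm (Fin.succ_ne_zero b')
  · intro h; exact Or.inl ⟨rfl, h⟩

theorem ext0_zero_left {k : ℕ} {r : Fin k → Fin k → Prop} {b : Fin (k + 1)} :
    ¬ ext0 r 0 b := by
  rintro (⟨-, h⟩ | ⟨a', b', ha, -, -⟩)
  · exact h rfl
  · exact Fin.succ_ne_zero a' ha.symm

theorem ispref_ext0 {k : ℕ} {r : Fin k → Fin k → Prop} (h : IsPref r) : IsPref (ext0 r) := by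
  haveI : IsStrictTotalOrder _ r := h
  refine { trichotomous := ?_, irrefl := ?_, trans := ?_ }
  · intro a b
    induction a using Fin.cases with
    | zero =>
      induction b using Fin.cases with
      | zero => exact fun _ _ => rfl
      | succ b => exact fun _ h2 => absurd (ext0_zero_right.mpr (Fin.succ_ne_zero b)) h2
    | succ a =>
      induction b using Fin.cases with
      | zero => exact fun h2 _ => absurd (ext0_zero_right.mpr (Fin.succ_ne_zero a)) h2
      | succ b =>
        rcases trichotomous_of r a b with h1 | h1 | h1
        · exact fun h2 _ => absurd (ext0_succ_succ.mpr h1) h2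
        · exact fun _ _ => by rw [h1]
        · exact fun _ h2 => absurd (ext0_succ_succ.mpr h1) h2
  · intro a
    induction a using Fin.cases with
    | zero => exact ext0_zero_left
    | succ a => exact fun hc => irrefl_of r a (ext0_succ_succ.mp hc)
  · intro a b c hab hbc
    induction c using Fin.cases with
    | zero =>
      refine ext0_zero_right.mpr ?_
      rintro rfl
      exact ext0_zero_left hab
    | succ c =>
      induction b using Fin.cases with
      | zero => exact absurd hbc ext0_zero_left
      | succ b =>
        induction a using Fin.cases with
        | zero => exact absurd hab ext0_zero_left
        | succ a =>
          exact ext0_succ_succ.mpr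
            (trans_of r (ext0_succ_succ.mp hab) (ext0_succ_succ.mp hbc))

theorem topOf_ext0 {k : ℕ} {r : Fin k → Fin k → Prop} {t : Fin k} (h : TopOf r t) :
    TopOf (ext0 r) t.succ := by
  intro y hy
  induction y using Fin.cases with
  | zero => exact ext0_zero_right.mpr (Fin.succ_ne_zero t)
  | succ y => exact ext0_succ_succ.mpr (h y (fun hc => hy (by rw [hc])))

theorem worst_ext0 {k : ℕ} {r : Fin k → Fin k → Prop} : WorstOf (ext0 r) 0 :=
  fun _ hy => ext0_zero_right.mpr hy

theorem spline_ext0 {k : ℕ} (hk : 0 < k) {r : Fin k → Fin k → Prop}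
    (hs : SPLine (· < ·) r) : SPLine (· < ·) (ext0 r) := by
  intro t x y htop hc
  have ht0 : t ≠ 0 := by
    rintro rfl
    have h1 : Fin.last k ≠ (0 : Fin (k + 1)) := by
      simp only [ne_eq, Fin.ext_iff, Fin.val_last, Fin.val_zero]
      omega
    exact ext0_zero_left (htop (Fin.last k) h1)
  obtain ⟨t', rfl⟩ : ∃ t', t = t'.succ := ⟨t.pred ht0, (Fin.succ_pred t ht0).symm⟩
  have htop' : TopOf r t' := by
    intro z hz
    have hne : z.succ ≠ t'.succ := fun hc => hz (Fin.succ_injective _ hc)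
    exact ext0_succ_succ.mp (htop z.succ hne)
  induction y using Fin.cases with
  | zero =>
    refine ext0_zero_right.mpr ?_
    rcases hc with ⟨-, h2⟩ | ⟨h1, -⟩
    · exact absurd h2 (Fin.not_lt_zero x)
    · exact Fin.pos_iff_ne_zero.mp h1
  | succ y =>
    induction x using Fin.cases with
    | zero =>
      exfalso
      rcases hc with ⟨h1, -⟩ | ⟨h2, -⟩
      · rcases h1 with h1 | h1
        · exact Fin.succ_ne_zero t' h1.symm
        · exact Fin.not_lt_zero _ h1
      · exact Fin.not_lt_zero _ h2
    | succ x =>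
      refine ext0_succ_succ.mpr (hs t' x y htop' ?_)
      rcases hc with ⟨h1, h2⟩ | ⟨h1, h2⟩
      · exact Or.inl ⟨h1.imp (fun h => Fin.succ_injective _ h) Fin.succ_lt_succ_iff.mp,
          Fin.succ_lt_succ_iff.mp h2⟩
      · exact Or.inr ⟨Fin.succ_lt_succ_iff.mp h1,
          h2.imp (fun h => Fin.succ_injective _ h) Fin.succ_lt_succ_iff.mp⟩

theorem ispref_res0 {k : ℕ} {r : Fin (k + 1) → Fin (k + 1) → Prop} (h : IsPref r) :
    IsPref (res0 r) := by
  haveI : IsStrictTotalOrder _ r := h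
  refine { trichotomous := ?_, irrefl := ?_, trans := ?_ }
  · intro a b
    rcases trichotomous_of r a.succ b.succ with h1 | h1 | h1
    · exact fun h2 _ => absurd h1 h2
    · exact fun _ _ => Fin.succ_injective _ h1
    · exact fun _ h2 => absurd h1 h2
  · intro a
    exact irrefl_of r a.succ
  · intro a b c h1 h2
    exact trans_of r h1 h2

theorem ext0_res0 {k : ℕ} {r : Fin (k + 1) → Fin (k + 1) → Prop} (hp : IsPref r)
    (hw : WorstOf r 0) : ext0 (res0 r) = r := by
  haveI : IsStrictTotalOrder _ r := hp
  funext a b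
  apply propext
  induction b using Fin.cases with
  | zero =>
    rw [ext0_zero_right]
    constructor
    · intro ha; exact hw a ha
    · intro hr ha
      rw [ha] at hr
      exact irrefl_of r 0 hr
  | succ b =>
    induction a using Fin.cases with
    | zero =>
      exact ⟨fun h => absurd h ext0_zero_left,
        fun hr => absurd (hw _ (Fin.succ_ne_zero b)) (asymm_of r hr)⟩
    | succ a => exact ext0_succ_succ

theorem spline_res0 {k : ℕ} {r : Fin (k + 1) → Fin (k + 1) → Prop}
    (hs : SPLine (· < ·) r) (hw : WorstOf r 0) : SPLine (· < ·) (res0 r) := by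
  intro t x y htop hc
  have htop' : TopOf r t.succ := by
    intro z hz
    induction z using Fin.cases with
    | zero => exact hw _ (Fin.succ_ne_zero t)
    | succ z => exact htop z (fun hc2 => hz (by rw [hc2]))
  refine hs t.succ x.succ y.succ htop' ?_
  rcases hc with ⟨h1, h2⟩ | ⟨h1, h2⟩
  · exact Or.inl ⟨h1.imp (fun h => by rw [h]) Fin.succ_lt_succ_iff.mpr,
      Fin.succ_lt_succ_iff.mpr h2⟩
  · exact Or.inr ⟨Fin.succ_lt_succ_iff.mpr h1,
      h2.imp (fun h => by rw [h]) Fin.succ_lt_succ_iff.mpr⟩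

theorem res0_ext0 {k : ℕ} (r : Fin k → Fin k → Prop) : res0 (ext0 r) = r := by
  funext a b
  exact propext ext0_succ_succ

/-! ### Counting -/

theorem spset_base : (SPSet ((· < ·) : Fin 1 → Fin 1 → Prop)).ncard = 1 := by
  have hval : SPSet ((· < ·) : Fin 1 → Fin 1 → Prop) = {fun _ _ => False} := by
    ext r
    simp only [SPSet, Set.mem_setOf_eq, Set.mem_singleton_iff]
    constructor
    · rintro ⟨hp, -⟩
      haveI : IsStrictTotalOrder _ r := hp
      funext a b
      apply propext
      simp only [iff_false]
      obtain rfl : a = b := Subsingleton.elim a b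
      exact irrefl_of r a
    · rintro rfl
      refine ⟨?_, ?_⟩
      · refine { trichotomous := ?_, irrefl := ?_, trans := ?_ }
        · exact fun a b _ _ => Subsingleton.elim a b
        · exact fun a h => h
        · exact fun _ _ _ h => h.elim
      · intro t x y _ hc
        rcases hc with ⟨-, h⟩ | ⟨h, -⟩ <;>
        · rw [Fin.lt_def] at h
          have := h.trans_le (Nat.le_of_lt_succ (Fin.is_lt _))
          omega
  rw [hval, Set.ncard_singleton]

theorem rev_mem_spset {n : ℕ} {r : Fin n → Fin n → Prop} (h : r ∈ SPSet ((· < ·))) :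
    relMap Fin.revPerm r ∈ SPSet ((· < ·) : Fin n → Fin n → Prop) := by
  obtain ⟨h1, h2⟩ := h
  refine ⟨ispref_relMap _ h1, ?_⟩
  have h3 := spline_relMap Fin.revPerm h2
  have heq : relMap (Fin.revPerm (n := n)) (· < ·) = (fun a b => b < a) := by
    funext a b
    apply propext
    show Fin.rev a < Fin.rev b ↔ b < a
    exact Fin.rev_lt_rev
  rw [heq] at h3
  exact spline_flip h3

theorem rev_worst {n : ℕ} {r : Fin n → Fin n → Prop} {w : Fin n} (hw : WorstOf r w) :
    WorstOf (relMap Fin.revPerm r) w.rev := by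
  intro z hz
  show r (Fin.rev z) (Fin.rev w.rev)
  rw [Fin.rev_rev]
  exact hw (Fin.rev z) (fun hc => hz (by rw [← hc, Fin.rev_rev]))

theorem spset_step {k : ℕ} (hk : 0 < k) :
    (SPSet ((· < ·) : Fin (k + 1) → Fin (k + 1) → Prop)).ncard
      = 2 * (SPSet ((· < ·) : Fin k → Fin k → Prop)).ncard := by
  classical
  set S1 : Set (Fin (k + 1) → Fin (k + 1) → Prop) := SPSet (· < ·) with hS1
  set S0 : Set (Fin k → Fin k → Prop) := SPSet (· < ·) with hS0
  set A : Set (Fin (k + 1) → Fin (k + 1) → Prop) := {r | r ∈ S1 ∧ WorstOf r 0} with hA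
  set B : Set (Fin (k + 1) → Fin (k + 1) → Prop) := {r | r ∈ S1 ∧ WorstOf r (Fin.last k)} with hB
  have hlast0 : (Fin.last k) ≠ (0 : Fin (k + 1)) := by
    simp only [ne_eq, Fin.ext_iff, Fin.val_last, Fin.val_zero]
    omega
  -- A is the image of S0 under ext0
  have himA : ext0 '' S0 = A := by
    apply Set.Subset.antisymm
    · rintro _ ⟨r, ⟨hp, hs⟩, rfl⟩
      exact ⟨⟨ispref_ext0 hp, spline_ext0 hk hs⟩, worst_ext0⟩
    · rintro r ⟨⟨hp, hs⟩, hw⟩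
      refine ⟨res0 r, ⟨ispref_res0 hp, spline_res0 hs hw⟩, ext0_res0 hp hw⟩
  have hext0_inj : Function.Injective (ext0 (k := k)) :=
    Function.LeftInverse.injective res0_ext0
  have hcardA : A.ncard = S0.ncard := by
    rw [← himA, Set.ncard_image_of_injective _ hext0_inj]
  -- B is the image of A under reversal
  have himB : relMap Fin.revPerm '' A = B := by
    apply Set.Subset.antisymm
    · rintro _ ⟨r, ⟨hmem, hw⟩, rfl⟩
      refine ⟨rev_mem_spset hmem, ?_⟩
      have := rev_worst hw
      rwa [Fin.rev_zero] at this
    · rintro r ⟨hmem, hw⟩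
      refine ⟨relMap Fin.revPerm r, ⟨rev_mem_spset hmem, ?_⟩, ?_⟩
      · have := rev_worst hw
        rwa [Fin.rev_last] at this
      · have := relMap_relMap_symm (Fin.revPerm (n := k + 1)) r
        rwa [Fin.revPerm_symm] at this
  have hcardB : B.ncard = A.ncard := by
    rw [← himB, Set.ncard_image_of_injective _ (relMap_inj _)]
  -- A and B partition S1
  have hunion : A ∪ B = S1 := by
    apply Set.Subset.antisymm
    · rintro r (⟨h, -⟩ | ⟨h, -⟩) <;> exact h
    · intro r hr
      obtain ⟨w, hw⟩ := worst_exists hr.1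
      rcases worst_endpoint hr.1 hr.2 hw with rfl | rfl
      · exact Or.inl ⟨hr, hw⟩
      · exact Or.inr ⟨hr, hw⟩
  have hdisj : Disjoint A B := by
    rw [Set.disjoint_left]
    rintro r ⟨⟨hp, -⟩, hw0⟩ ⟨-, hwl⟩
    exact pref_asymm hp (hw0 (Fin.last k) hlast0) (hwl 0 (Ne.symm hlast0))
  calc S1.ncard = (A ∪ B).ncard := by rw [hunion]
    _ = A.ncard + B.ncard := Set.ncard_union_eq hdisj (Set.toFinite A) (Set.toFinite B)
    _ = 2 * S0.ncard := by rw [hcardB, hcardA]; ring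

theorem spset_core : ∀ k : ℕ, 0 < k →
    (SPSet ((· < ·) : Fin k → Fin k → Prop)).ncard = 2 ^ (k - 1) := by
  intro k
  induction k with
  | zero => omega
  | succ n ih =>
    intro _
    rcases Nat.eq_zero_or_pos n with rfl | hn
    · simpa using spset_base
    · rw [spset_step hn, ih hn]
      have h1 : n + 1 - 1 = (n - 1) + 1 := by omega
      rw [h1, pow_succ]
      ring

end SP0

/-- there are exactly `2^(k-1)` linear orders on a `k`-element set that are
single-peaked with respect to a given linear order. -/
theorem stmt0 {X : Type*} [Fintype X] (k : ℕ) (hk : 1 ≤ k) (hcard : Fintype.card X = k)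
    (lt : X → X → Prop) (hlt : IsStrictTotalOrder X lt) :
    {r : X → X → Prop | IsPref r ∧ SPLine lt r}.ncard = 2 ^ (k - 1) := by
  haveI : IsStrictTotalOrder X lt := hlt
  letI : DecidableRel lt := Classical.decRel lt
  letI : LinearOrder X := linearOrderOfSTO lt
  have e := monoEquivOfFin X hcard
  let f : X ≃ Fin k := e.toEquiv.symm
  have hlt_map : SP0.relMap f lt = ((· < ·) : Fin k → Fin k → Prop) := by
    funext a b
    apply propext
    show lt (e a) (e b) ↔ a < b
    exact e.lt_iff_lt
  have h1 : {r : X → X → Prop | IsPref r ∧ SPLine lt r} = SP0.SPSet lt := rfl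
  rw [h1, ← SP0.ncard_SPSet_eq f lt, hlt_map]
  exact SP0.spset_core k hk
end

section
/- For a star tree on a finite set X with k ≥ 2 elements (one center node adjacent to all k-1 leaves), the set of linear orders on X single-peaked with respect to the star consists exactly of those linear orders that rank the center first or second; consequently there are exactly 2·(k-1)! such orders. -/
/-- The star graph on `X` with center `c`. -/
def StarG {X : Type*} (c : X) : SimpleGraph X := SimpleGraph.fromRel (fun a _ => a = c)

section StarAux

open SimpleGraph

lemma starG_adj {X : Type*} (c a b : X) :
    (StarG c).Adj a b ↔ a ≠ b ∧ (a = c ∨ b = c) := by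
  unfold StarG
  rw [SimpleGraph.fromRel_adj]

lemma onPath_center {X : Type*} {c t y : X} (ht : t ≠ c) (hty : t ≠ y) :
    OnPath (StarG c) c t y := by
  intro p _
  cases p with
  | nil => exact absurd rfl hty
  | @cons _ v _ h q =>
    have hv : v = c := by
      rcases (starG_adj c t _).1 h with ⟨_, h1 | h2⟩
      · exact absurd h1 ht
      · exact h2
    rw [SimpleGraph.Walk.support_cons]
    exact List.mem_cons_of_mem _ (hv ▸ q.start_mem_support)

lemma exists_top {X : Type*} [Finite X] [Nonempty X] (r : X → X → Prop) (hr : IsPref r) :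
    ∃ t, TopOf r t := by
  haveI : IsStrictTotalOrder X r := hr
  have hwf : WellFounded r := Finite.wellFounded_of_trans_of_irrefl r
  obtain ⟨t, -, ht⟩ := hwf.has_min Set.univ ⟨Classical.arbitrary X, trivial⟩
  refine ⟨t, fun y hy => ?_⟩
  rcases trichotomous_of r t y with h | h | h
  · exact h
  · exact absurd h.symm hy
  · exact absurd h (ht y trivial)

lemma sp_star_iff {X : Type*} [Finite X] [Nonempty X] (c : X) (r : X → X → Prop)
    (hr : IsPref r) :
    SPTree (StarG c) r ↔ ∀ y z, r y c → r z c → y = z := by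
  haveI : IsStrictTotalOrder X r := hr
  constructor
  · intro hsp y z hy hz
    obtain ⟨t, htop⟩ := exists_top r hr
    have htc : t ≠ c := by
      rintro rfl
      have hyc : y ≠ t := fun h => irrefl_of r t (h ▸ hy)
      exact asymm_of r (htop y hyc) hy
    have key : ∀ w, r w c → w = t := by
      intro w hw
      by_contra hwt
      have hwc : w ≠ c := fun h => irrefl_of r c (h ▸ hw)
      rcases hsp t c w htop (onPath_center htc (fun h => hwt h.symm)) with h | h
      · exact hwc h.symm
      · exact asymm_of r h hw
    rw [key y hy, key z hz]
  · intro hcond t a b htop hpath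
    by_cases hab : a = b
    · exact Or.inl hab
    refine Or.inr ?_
    by_cases htb : t = b
    · exfalso
      subst htb
      have := hpath SimpleGraph.Walk.nil SimpleGraph.Walk.IsPath.nil
      simp only [SimpleGraph.Walk.support_nil, List.mem_singleton] at this
      exact hab this
    by_cases hstar : t = c ∨ b = c
    · have hadj : (StarG c).Adj t b := (starG_adj c t b).2 ⟨htb, hstar⟩
      have hp : (SimpleGraph.Walk.cons hadj SimpleGraph.Walk.nil).IsPath := by
        simp [SimpleGraph.Walk.isPath_def, htb]
      have := hpath _ hp
      simp only [SimpleGraph.Walk.support_cons, SimpleGraph.Walk.support_nil,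
        List.mem_cons, List.mem_singleton] at this
      rcases this with rfl | rfl | h
      · exact htop b (fun h => htb h.symm)
      · exact absurd rfl hab
      · exact absurd h List.not_mem_nil
    push_neg at hstar
    obtain ⟨htc, hbc⟩ := hstar
    have hadj1 : (StarG c).Adj t c := (starG_adj c t c).2 ⟨htc, Or.inr rfl⟩
    have hadj2 : (StarG c).Adj c b := (starG_adj c c b).2 ⟨fun h => hbc h.symm, Or.inl rfl⟩
    have hp : (SimpleGraph.Walk.cons hadj1 (SimpleGraph.Walk.cons hadj2
        SimpleGraph.Walk.nil)).IsPath := by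
      have hcb : c ≠ b := fun h => hbc h.symm
      simp [SimpleGraph.Walk.isPath_def, htc, htb, hcb]
    have := hpath _ hp
    simp only [SimpleGraph.Walk.support_cons, SimpleGraph.Walk.support_nil,
      List.mem_cons, List.mem_singleton] at this
    rcases this with rfl | rfl | rfl | h
    · exact htop b (fun h => htb h.symm)
    · -- a = c, show r c b
      rcases trichotomous_of r a b with h | h | h
      · exact h
      · exact absurd h hab
      · exact absurd (hcond b t h (htop a (fun h' => htc h'.symm))).symm htb
    · exact absurd rfl hab
    · exact absurd h List.not_mem_nil

lemma isPref_lt {X : Type*} {k : ℕ} (e : X ≃ Fin k) :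
    IsPref (fun a b => e a < e b) := by
  refine { trichotomous := fun a b => ?_, irrefl := fun a => lt_irrefl _,
           trans := fun a b c hab hbc => lt_trans hab hbc }
  intro hab hba
  rcases lt_trichotomy (e a) (e b) with h | h | h
  · exact absurd h hab
  · exact e.injective h
  · exact absurd h hba

lemma F_inj {X : Type*} {k : ℕ} :
    Function.Injective (fun (e : X ≃ Fin k) => (fun a b => e a < e b : X → X → Prop)) := by
  intro e1 e2 h
  have h' : ∀ a b : X, e1 a < e1 b ↔ e2 a < e2 b := fun a b =>
    iff_of_eq (congrFun (congrFun h a) b)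
  have hmono : StrictMono (fun i => e2 (e1.symm i) : Fin k → Fin k) := by
    intro i j hij
    have := (h' (e1.symm i) (e1.symm j)).1 (by simpa using hij)
    exact this
  let iso : Fin k ≃o Fin k := StrictMono.orderIsoOfSurjective _ hmono
    (e1.symm.trans e2).surjective
  have hiso : ∀ i, e2 (e1.symm i) = i := fun i => by
    have := Fin.coe_orderIso_apply iso i
    exact Fin.ext this
  apply Equiv.ext
  intro a
  have := hiso (e1 a)
  simpa using this.symm

lemma exists_equiv {X : Type*} [Fintype X] {k : ℕ} (hcard : Fintype.card X = k)
    (r : X → X → Prop) (hr : IsPref r) :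
    ∃ e : X ≃ Fin k, ∀ a b, r a b ↔ e a < e b := by
  classical
  haveI : IsStrictTotalOrder X r := hr
  letI : LinearOrder X := linearOrderOfSTO r
  let e := (monoEquivOfFin X hcard).symm
  refine ⟨e.toEquiv, fun a b => ?_⟩
  have : r a b ↔ a < b := Iff.rfl
  rw [this]
  exact e.lt_iff_lt.symm

lemma cond_iff {X : Type*} {k : ℕ} (e : X ≃ Fin k) (c : X) (hk : 2 ≤ k) :
    (∀ y z, e y < e c → e z < e c → y = z) ↔ (e c : ℕ) ≤ 1 := by
  constructor
  · intro h
    by_contra hlt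
    push_neg at hlt
    have h0 : e (e.symm ⟨0, by omega⟩) < e c := by
      simp only [Equiv.apply_symm_apply, Fin.lt_def]; omega
    have h1 : e (e.symm ⟨1, by omega⟩) < e c := by
      simp only [Equiv.apply_symm_apply, Fin.lt_def]; omega
    have := h _ _ h0 h1
    have := congrArg e this
    simp only [Equiv.apply_symm_apply, Fin.mk.injEq] at this
    omega
  · intro h y z hy hz
    rw [Fin.lt_def] at hy hz
    have hy0 : (e y : ℕ) = 0 := by omega
    have hz0 : (e z : ℕ) = 0 := by omega
    exact e.injective (Fin.ext (hy0.trans hz0.symm))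

lemma ncard_fiber {X : Type*} [Fintype X] [DecidableEq X] {k : ℕ}
    (hcard : Fintype.card X = k) (c : X) (i : Fin k) :
    {e : X ≃ Fin k | e c = i}.ncard = (k - 1).factorial := by
  classical
  rw [← Nat.card_coe_set_eq]
  have e0 : (({c} : Set X)) ≃ (({i} : Set (Fin k))) :=
    Equiv.ofUnique _ _
  have hsub : {e : X ≃ Fin k // e c = i} ≃
      { e : X ≃ Fin k // ∀ x : ({c} : Set X), e x = e0 x } := by
    refine Equiv.subtypeEquivRight (fun e => ?_)
    constructor
    · rintro he ⟨x, hx⟩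
      rcases Set.mem_singleton_iff.1 hx with rfl
      have : (e0 ⟨x, hx⟩ : Fin k) = i := (e0 ⟨x, hx⟩).2
      rw [this]; exact he
    · intro he
      have := he ⟨c, rfl⟩
      have h2 : (e0 ⟨c, rfl⟩ : Fin k) = i := (e0 ⟨c, rfl⟩).2
      rw [h2] at this; exact this
  have hcompl := Equiv.Set.compl e0
  have hE : {e : X ≃ Fin k // e c = i} ≃
      ((({c} : Set X)ᶜ : Set X) ≃ (({i} : Set (Fin k))ᶜ : Set (Fin k))) :=
    hsub.trans hcompl
  have hcards : Fintype.card (({c} : Set X)ᶜ : Set X) =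
      Fintype.card ((({i} : Set (Fin k))ᶜ : Set (Fin k))) := by
    rw [Fintype.card_compl_set, Fintype.card_compl_set]
    simp [hcard]
  have g := Fintype.equivOfCardEq hcards
  have : Nat.card {e : X ≃ Fin k // e c = i} =
      Fintype.card ((({c} : Set X)ᶜ : Set X) ≃ (({i} : Set (Fin k))ᶜ : Set (Fin k))) := by
    rw [Nat.card_congr hE, Nat.card_eq_fintype_card]
  rw [show (Nat.card ↥{e : X ≃ Fin k | e c = i}) = Nat.card {e : X ≃ Fin k // e c = i} from
    Nat.card_congr (Equiv.subtypeEquivRight (fun _ => Iff.rfl)), this, Fintype.card_equiv g,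
    Fintype.card_compl_set]
  simp [hcard]

end StarAux

/-- the orders single-peaked w.r.t. a star are exactly those ranking the center
first or second, and there are `2·(k-1)!` of them. -/
theorem stmt1 {X : Type*} [Fintype X] (k : ℕ) (hk : 2 ≤ k) (hcard : Fintype.card X = k)
    (c : X) :
    {r : X → X → Prop | IsPref r ∧ SPTree (StarG c) r} =
      {r : X → X → Prop | IsPref r ∧ ∀ y z, r y c → r z c → y = z} ∧
    {r : X → X → Prop | IsPref r ∧ SPTree (StarG c) r}.ncard = 2 * (k - 1).factorial := by
  classical
  haveI : Nonempty X := Fintype.card_pos_iff.1 (by omega)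
  have hpart1 : {r : X → X → Prop | IsPref r ∧ SPTree (StarG c) r} =
      {r : X → X → Prop | IsPref r ∧ ∀ y z, r y c → r z c → y = z} := by
    ext r
    simp only [Set.mem_setOf_eq]
    constructor
    · rintro ⟨h1, h2⟩
      exact ⟨h1, (sp_star_iff c r h1).1 h2⟩
    · rintro ⟨h1, h2⟩
      exact ⟨h1, (sp_star_iff c r h1).2 h2⟩
  refine ⟨hpart1, ?_⟩
  rw [hpart1]
  have himg : {r : X → X → Prop | IsPref r ∧ ∀ y z, r y c → r z c → y = z} =
      (fun (e : X ≃ Fin k) => (fun a b => e a < e b : X → X → Prop)) ''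
        {e : X ≃ Fin k | (e c : ℕ) ≤ 1} := by
    ext r
    simp only [Set.mem_setOf_eq, Set.mem_image]
    constructor
    · rintro ⟨h1, h2⟩
      obtain ⟨e, he⟩ := exists_equiv hcard r h1
      refine ⟨e, ?_, ?_⟩
      · exact (cond_iff e c hk).1 (fun y z hy hz => h2 y z ((he y c).2 hy) ((he z c).2 hz))
      · funext a b
        exact propext ((he a b).symm)
    · rintro ⟨e, he, rfl⟩
      exact ⟨isPref_lt e, fun y z hy hz => ((cond_iff e c hk).2 he) y z hy hz⟩
  rw [himg, Set.ncard_image_of_injective _ F_inj]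
  have hsplit : {e : X ≃ Fin k | (e c : ℕ) ≤ 1} =
      {e : X ≃ Fin k | e c = ⟨0, by omega⟩} ∪ {e : X ≃ Fin k | e c = ⟨1, by omega⟩} := by
    ext e
    simp only [Set.mem_setOf_eq, Set.mem_union, Fin.ext_iff]
    omega
  have hdis : Disjoint {e : X ≃ Fin k | e c = ⟨0, by omega⟩}
      {e : X ≃ Fin k | e c = (⟨1, by omega⟩ : Fin k)} := by
    rw [Set.disjoint_left]
    rintro e he1 he2
    simp only [Set.mem_setOf_eq] at he1 he2
    rw [he1] at he2
    simp [Fin.ext_iff] at he2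
  rw [hsplit, Set.ncard_union_eq hdis (Set.toFinite _) (Set.toFinite _),
      ncard_fiber hcard, ncard_fiber hcard, two_mul]
end

section
/- Let T be a tree on a finite set X and let x, y, z ∈ X be distinct with y on the unique path in T between x and z. Then no linear order on X that is single-peaked with respect to T ranks y strictly below both x and z. -/
/-- if `y` is on the unique path between `x` and `z` in a tree, no single-peaked
order ranks `y` strictly below both `x` and `z`. -/
theorem stmt2 {X : Type*} [Fintype X] (G : SimpleGraph X) (hG : G.IsTree) (x y z : X)
    (hxy : x ≠ y) (hyz : y ≠ z) (hxz : x ≠ z) (hpath : OnPath G y x z)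
    (r : X → X → Prop) (hr : IsPref r) (hsp : SPTree G r) :
    ¬ (r x y ∧ r z y) := by
  classical
  rintro ⟨hrxy, hrzy⟩
  haveI : IsStrictTotalOrder X r := hr
  have hwf : WellFounded r := Finite.wellFounded_of_trans_of_irrefl r
  set t := hwf.min Set.univ ⟨x, trivial⟩ with ht
  have htop : TopOf r t := by
    intro u hu
    rcases trichotomous_of r t u with h | h | h
    · exact h
    · exact absurd h.symm hu
    · exact absurd h (hwf.not_lt_min Set.univ (x := u) trivial)
  -- paths from t to x and t to z
  obtain ⟨p1, hp1, hp1u⟩ := hG.existsUnique_path t x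
  obtain ⟨p2, hp2, hp2u⟩ := hG.existsUnique_path t z
  have hy : y ∈ (p1.reverse.append p2).support := by
    have := hpath (p1.reverse.append p2).bypass (SimpleGraph.Walk.bypass_isPath _)
    exact SimpleGraph.Walk.support_bypass_subset _ this
  rw [SimpleGraph.Walk.mem_support_append_iff] at hy
  have hfin : ∀ a : X, a ≠ y → ¬ (r a y ∧ r y a) := by
    intro a _ ⟨h1, h2⟩
    exact absurd (_root_.trans h1 h2) (irrefl a)
  rcases hy with hy | hy
  · rw [SimpleGraph.Walk.support_reverse, List.mem_reverse] at hy
    have honp : OnPath G y t x := by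
      intro q hq
      rwa [hp1u q hq]
    rcases hsp t y x htop honp with h | h
    · exact hxy h.symm
    · exact hfin x hxy ⟨hrxy, h⟩
  · have honp : OnPath G y t z := by
      intro q hq
      rwa [hp2u q hq]
    rcases hsp t y z htop honp with h | h
    · exact hyz h
    · exact hfin z (Ne.symm hyz) ⟨hrzy, h⟩
end

section
/- Let T be a linear tree (path graph) on a finite set X with |X| ≥ 5, and let D be a rich set of linear orders on X that is single-peaked with respect to T. Then D does not satisfy the rotation property. -/
lemma walk_ivt {X : Type*} {k : ℕ} (G : SimpleGraph X) (e : X ≃ Fin k)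
    (he : ∀ a b, G.Adj a b ↔ ((e a : ℕ) + 1 = e b ∨ (e b : ℕ) + 1 = e a))
    {x y : X} (p : G.Walk x y) (j : Fin k)
    (hj : ((e x : ℕ) ≤ (j : ℕ) ∧ (j : ℕ) ≤ (e y : ℕ)) ∨
          ((e y : ℕ) ≤ (j : ℕ) ∧ (j : ℕ) ≤ (e x : ℕ))) :
    e.symm j ∈ p.support := by
  induction p with
  | @nil u =>
    have : j = e u := Fin.ext (by omega)
    simp [this]
  | @cons a w y h p ih =>
    have hadj := (he _ _).1 h
    by_cases hc : ((e w : ℕ) ≤ (j : ℕ) ∧ (j : ℕ) ≤ (e y : ℕ)) ∨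
        ((e y : ℕ) ≤ (j : ℕ) ∧ (j : ℕ) ≤ (e w : ℕ))
    · simp [SimpleGraph.Walk.support_cons]
      exact Or.inr (ih hc)
    · have : j = e a := Fin.ext (by omega)
      simp [this, SimpleGraph.Walk.support_cons]

/-- on a path graph with at least 5 vertices, a rich single-peaked set of
preferences violates the rotation property. -/
theorem stmt5 {X : Type*} [Fintype X] (k : ℕ) (hk : 5 ≤ k) (hcard : Fintype.card X = k)
    (G : SimpleGraph X) (hpath : IsPathG G k)
    (D : Set (X → X → Prop)) (hD : ∀ P ∈ D, IsPref P) (hsp : ∀ P ∈ D, SPTree G P)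
    (hrich : Rich D) : ¬ Rotation D := by
  obtain ⟨e, he⟩ := hpath
  have hk5 : ∀ m : ℕ, m < 5 → m < k := fun m hm => lt_of_lt_of_le hm hk
  set v : ℕ → X := fun m => e.symm ⟨m % k, Nat.mod_lt _ (by omega)⟩ with hv
  have hev : ∀ m : ℕ, m < 5 → (e (v m) : ℕ) = m := by
    intro m hm
    simp [hv, Nat.mod_eq_of_lt (hk5 m hm)]
  have hvne : ∀ m l : ℕ, m < 5 → l < 5 → m ≠ l → v m ≠ v l := by
    intro m l hm hl hml hcon
    apply hml
    have := congrArg (fun x => (e x : ℕ)) hcon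
    simpa [hev m hm, hev l hl] using this
  have honpath : ∀ i j l : ℕ, i < 5 → j < 5 → l < 5 →
      ((i ≤ j ∧ j ≤ l) ∨ (l ≤ j ∧ j ≤ i)) → OnPath G (v j) (v i) (v l) := by
    intro i j l hi hj hl hb p _
    have := walk_ivt G e he p ⟨j % k, Nat.mod_lt _ (by omega)⟩
      (by simp [hev i hi, hev l hl, Nat.mod_eq_of_lt (hk5 j hj)]; omega)
    exact this
  -- preferences with tops at 0, 2, 4
  obtain ⟨P0, hP0D, hP0⟩ := hrich (v 0)
  obtain ⟨P2, hP2D, hP2⟩ := hrich (v 2)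
  obtain ⟨P4, hP4D, hP4⟩ := hrich (v 4)
  have hT0 := hD P0 hP0D
  have hT2 := hD P2 hP2D
  have hT4 := hD P4 hP4D
  have sp0 : ∀ j l : ℕ, j < 5 → l < 5 → 0 ≤ j → j ≤ l → j ≠ l → P0 (v j) (v l) := by
    intro j l hj hl _ hjl hne
    rcases hsp P0 hP0D (v 0) (v j) (v l) hP0
      (honpath 0 j l (by omega) hj hl (by omega)) with h | h
    · exact absurd h (hvne j l hj hl hne)
    · exact h
  have sp4 : ∀ j l : ℕ, j < 5 → l < 5 → l ≤ j → j ≠ l → P4 (v j) (v l) := by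
    intro j l hj hl hjl hne
    rcases hsp P4 hP4D (v 4) (v j) (v l) hP4
      (honpath 4 j l (by omega) hj hl (by omega)) with h | h
    · exact absurd h (hvne j l hj hl hne)
    · exact h
  intro hrot
  have htri : ∀ a b, P2 a b ∨ a = b ∨ P2 b a := fun a b => by
    by_contra h
    push_neg at h
    exact h.2.1 (hT2.trichotomous a b h.1 h.2.2)
  -- chains
  have c01 : P0 (v 0) (v 1) := sp0 0 1 (by omega) (by omega) (by omega) (by omega) (by omega)
  have c12 : P0 (v 1) (v 2) := sp0 1 2 (by omega) (by omega) (by omega) (by omega) (by omega)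
  have c23 : P0 (v 2) (v 3) := sp0 2 3 (by omega) (by omega) (by omega) (by omega) (by omega)
  have c24 : P0 (v 2) (v 4) := sp0 2 4 (by omega) (by omega) (by omega) (by omega) (by omega)
  have d43 : P4 (v 4) (v 3) := sp4 4 3 (by omega) (by omega) (by omega) (by omega)
  have d32 : P4 (v 3) (v 2) := sp4 3 2 (by omega) (by omega) (by omega) (by omega)
  have d20 : P4 (v 2) (v 0) := sp4 2 0 (by omega) (by omega) (by omega) (by omega)
  have t20 : P2 (v 2) (v 0) := hP2 (v 0) (hvne 0 2 (by omega) (by omega) (by omega))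
  have t24 : P2 (v 2) (v 4) := hP2 (v 4) (hvne 4 2 (by omega) (by omega) (by omega))
  rcases htri (v 0) (v 3) with h03 | h03 | h30
  · exact hrot (v 0) (v 1) (v 2) (v 3)
      ⟨P0, hP0D, c01, c12, c23⟩ ⟨P2, hP2D, t20, h03⟩
  · exact hvne 0 3 (by omega) (by omega) (by omega) h03
  · rcases htri (v 0) (v 4) with h04 | h04 | h40
    · exact hrot (v 0) (v 1) (v 2) (v 4)
        ⟨P0, hP0D, c01, c12, c24⟩ ⟨P2, hP2D, t20, h04⟩
    · exact hvne 0 4 (by omega) (by omega) (by omega) h04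
    · exact hrot (v 4) (v 3) (v 2) (v 0)
        ⟨P4, hP4D, d43, d32, d20⟩ ⟨P2, hP2D, t24, h40⟩
end

section
/- Let T be any tree on a finite set X with |X| ≥ 5, and let D be a rich set of linear orders on X that is single-peaked with respect to T. Then D does not satisfy the rotation property. -/
section Stmt6Aux

open SimpleGraph

variable {X : Type*} {G : SimpleGraph X}

lemma stmt6_onPath_self_left (a b : X) : OnPath G a a b :=
  fun p _ => p.start_mem_support

lemma stmt6_onPath_symm {a u v : X} (h : OnPath G a u v) : OnPath G a v u := by
  intro p hp
  have := h p.reverse hp.reverse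
  rwa [SimpleGraph.Walk.support_reverse, List.mem_reverse] at this

noncomputable def stmt6_thePath (hG : G.IsTree) (u v : X) : G.Walk u v :=
  (hG.existsUnique_path u v).exists.choose

lemma stmt6_thePath_isPath (hG : G.IsTree) (u v : X) : (stmt6_thePath hG u v).IsPath :=
  (hG.existsUnique_path u v).exists.choose_spec

lemma stmt6_path_eq (hG : G.IsTree) {u v : X} (p : G.Walk u v) (hp : p.IsPath) :
    p = stmt6_thePath hG u v := by
  have h := hG.2.path_unique ⟨p, hp⟩ ⟨stmt6_thePath hG u v, stmt6_thePath_isPath hG u v⟩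
  exact congrArg Subtype.val h

lemma stmt6_onPath_iff (hG : G.IsTree) {a u v : X} :
    OnPath G a u v ↔ a ∈ (stmt6_thePath hG u v).support :=
  ⟨fun h => h _ (stmt6_thePath_isPath hG u v),
   fun h p hp => by rw [stmt6_path_eq hG p hp]; exact h⟩

lemma stmt6_not_onPath_of_path {a u v : X} (p : G.Walk u v) (hp : p.IsPath)
    (ha : a ∉ p.support) : ¬ OnPath G a u v :=
  fun h => ha (h p hp)

lemma stmt6_onPath_trans_not (hG : G.IsTree) {a u v w : X}
    (h1 : ¬ OnPath G a u v) (h2 : ¬ OnPath G a v w) : ¬ OnPath G a u w := by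
  classical
  rw [stmt6_onPath_iff hG] at h1 h2
  set q := ((stmt6_thePath hG u v).append (stmt6_thePath hG v w)).toPath with hq
  apply stmt6_not_onPath_of_path (q : G.Walk u w) q.2
  intro hmem
  have hsub := SimpleGraph.Walk.support_toPath_subset
    ((stmt6_thePath hG u v).append (stmt6_thePath hG v w)) hmem
  rw [SimpleGraph.Walk.mem_support_append_iff] at hsub
  tauto

lemma stmt6_exists_first_step (hG : G.IsTree) {c x : X} (h : c ≠ x) :
    ∃ d, G.Adj c d ∧ ¬ OnPath G c d x ∧ OnPath G d c x := by
  obtain ⟨d, hadj, q, hq⟩ := SimpleGraph.Walk.exists_eq_cons_of_ne h (stmt6_thePath hG c x)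
  have hp := stmt6_thePath_isPath hG c x
  rw [hq, SimpleGraph.Walk.cons_isPath_iff] at hp
  refine ⟨d, hadj, stmt6_not_onPath_of_path q hp.1 hp.2, ?_⟩
  rw [stmt6_onPath_iff hG, hq, SimpleGraph.Walk.support_cons]
  exact List.mem_cons_of_mem _ q.start_mem_support

lemma stmt6_onPath_antisymm (hG : G.IsTree) {a b u : X}
    (h1 : OnPath G a u b) (h2 : OnPath G b u a) : a = b := by
  classical
  set p := stmt6_thePath hG u b with hpdef
  have hp := stmt6_thePath_isPath hG u b
  have ha : a ∈ p.support := h1 p hp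
  have hq : (p.takeUntil a ha).IsPath := hp.takeUntil ha
  have hb : b ∈ (p.takeUntil a ha).support := h2 _ hq
  have hnodup : p.support.Nodup := hp.support_nodup
  rw [← SimpleGraph.Walk.take_spec p ha, SimpleGraph.Walk.support_append] at hnodup
  have hdisj := List.disjoint_of_nodup_append hnodup
  have hbd : b ∈ (p.dropUntil a ha).support := SimpleGraph.Walk.end_mem_support _
  rw [SimpleGraph.Walk.support_eq_cons (p.dropUntil a ha)] at hbd
  rcases List.mem_cons.mp hbd with h | h
  · exact h.symm
  · exact (hdisj hb h).elim

lemma stmt6_adj_eq_of_not_onPath (hG : G.IsTree) {c d d' : X} (h1 : G.Adj c d)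
    (h2 : G.Adj c d') (h3 : ¬ OnPath G c d d') : d = d' := by
  by_contra hne
  rw [OnPath] at h3
  push_neg at h3
  obtain ⟨p, hp, hc⟩ := h3
  have hpath : (p.concat h2.symm).IsPath := by
    rw [← SimpleGraph.Walk.isPath_reverse_iff, SimpleGraph.Walk.reverse_concat,
      SimpleGraph.Walk.cons_isPath_iff]
    exact ⟨hp.reverse, by rwa [SimpleGraph.Walk.support_reverse, List.mem_reverse]⟩
  have hcyc : (SimpleGraph.Walk.cons h1 (p.concat h2.symm)).IsCycle := by
    rw [SimpleGraph.Walk.cons_isCycle_iff]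
    refine ⟨hpath, ?_⟩
    rw [SimpleGraph.Walk.edges_concat, List.concat_eq_append, List.mem_append]
    rintro (h | h)
    · exact hc (p.fst_mem_support_of_mem_edges h)
    · rw [List.mem_singleton, Sym2.eq_iff] at h
      rcases h with ⟨h4, h5⟩ | ⟨-, h6⟩
      · exact h1.ne h5.symm
      · exact hne h6
  exact hG.2 _ hcyc

lemma stmt6_exists_bot {P : X → X → Prop} (hP : IsStrictTotalOrder X P) :
    ∀ s : Finset X, s.Nonempty → ∃ e ∈ s, ∀ x ∈ s, x ≠ e → P x e := by
  classical
  intro s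
  induction s using Finset.induction_on with
  | empty => intro hs; exact absurd hs (by simp)
  | @insert a s ha ih =>
    intro _
    rcases s.eq_empty_or_nonempty with rfl | hs'
    · refine ⟨a, Finset.mem_insert_self a _, fun x hx hne => ?_⟩
      rcases Finset.mem_insert.mp hx with rfl | hx'
      · exact absurd rfl hne
      · exact absurd hx' (by simp)
    · obtain ⟨e, hes, hmin⟩ := ih hs'
      rcases (show P a e ∨ a = e ∨ P e a by rcases em (P a e) with h1 | h1; exact Or.inl h1; rcases em (P e a) with h2 | h2; exact Or.inr (Or.inr h2); exact Or.inr (Or.inl (hP.trichotomous a e h1 h2))) with h | rfl | h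
      · refine ⟨e, Finset.mem_insert_of_mem hes, fun x hx hne => ?_⟩
        rcases Finset.mem_insert.mp hx with rfl | hx'
        · exact h
        · exact hmin x hx' hne
      · exact absurd hes ha
      · refine ⟨a, Finset.mem_insert_self a s, fun x hx hne => ?_⟩
        rcases Finset.mem_insert.mp hx with rfl | hx'
        · exact absurd rfl hne
        · by_cases hxe : x = e
          · exact hxe ▸ h
          · exact hP.trans x e a (hmin x hx' hxe) h

lemma stmt6_exists_centroid [Fintype X] (hG : G.IsTree) (hcard : 5 ≤ Fintype.card X) :
    ∃ c : X, ∀ e : X, e ≠ c → ∃ b1 b2 : X, b1 ≠ b2 ∧ b1 ≠ c ∧ b1 ≠ e ∧ b2 ≠ c ∧ b2 ≠ e ∧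
      OnPath G c b1 e ∧ OnPath G c b2 e := by
  classical
  haveI : Nonempty X := Fintype.card_pos_iff.mp (by omega)
  set n := Fintype.card X with hn
  set B : X → X → Finset X :=
    fun c e => Finset.univ.filter (fun x => ¬ OnPath G c x e) with hB
  have hBmem : ∀ {c e x : X}, x ∈ B c e ↔ ¬ OnPath G c x e := by
    intro c e x
    simp only [hB, Finset.mem_filter, Finset.mem_univ, true_and]
  have hcB : ∀ c e : X, c ∉ B c e := fun c e h =>
    (hBmem.mp h) (stmt6_onPath_self_left c e)
  have heB : ∀ {c e : X}, e ≠ c → e ∈ B c e := by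
    intro c e hne
    refine hBmem.mpr (stmt6_not_onPath_of_path SimpleGraph.Walk.nil
      SimpleGraph.Walk.IsPath.nil ?_)
    simp only [SimpleGraph.Walk.support_nil, List.mem_singleton]
    exact fun h => hne h.symm
  set F : X → ℕ := fun c => (Finset.univ.erase c).sup (fun e => (B c e).card) with hF
  obtain ⟨c, -, hcmin⟩ := Finset.exists_min_image Finset.univ F Finset.univ_nonempty
  have key : ∀ e : X, e ≠ c → (B c e).card ≤ n - 3 := by
    by_contra hcon
    push_neg at hcon
    obtain ⟨e, hec, hke⟩ := hcon
    set k := (B c e).card with hkdef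
    have hk3 : 3 ≤ k := by omega
    obtain ⟨d, hadj, hd1, hd2⟩ := stmt6_exists_first_step hG (Ne.symm hec)
    have hdB : d ∈ B c e := hBmem.mpr hd1
    have hdc : d ≠ c := fun h => hcB c e (h ▸ hdB)
    have f2 : ∀ x, x ∈ B c e → x ≠ d → OnPath G d x c := by
      intro x hx hxd
      have hxc : x ≠ c := fun h => hcB c e (h ▸ hx)
      obtain ⟨d', hadj', hnd', hond'⟩ := stmt6_exists_first_step hG (Ne.symm hxc)
      have hd'B : ¬ OnPath G c d' e := stmt6_onPath_trans_not hG hnd' (hBmem.mp hx)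
      have hdd' : d = d' := stmt6_adj_eq_of_not_onPath hG hadj hadj'
        (stmt6_onPath_trans_not hG hd1 (fun h => hd'B (stmt6_onPath_symm h)))
      rw [hdd']
      exact stmt6_onPath_symm hond'
    have hFd : ∀ e' : X, e' ≠ d → (B d e').card ≤ k - 1 := by
      intro e' he'
      have hxd_mem : ∀ x ∈ B d e', x ≠ d := fun x hx h => (hcB d e') (h ▸ hx)
      by_cases hc' : OnPath G d c e'
      · have hsub : B d e' ⊆ (B c e).erase d := by
          intro x hx
          have hx1 : ¬ OnPath G d x e' := hBmem.mp hx
          have hxd : x ≠ d := hxd_mem x hx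
          have hxc : x ≠ c := fun h => hx1 (h ▸ hc')
          refine Finset.mem_erase.mpr ⟨hxd, hBmem.mpr ?_⟩
          intro hxe
          have hcxd : OnPath G c x d := by
            by_contra hno
            exact (stmt6_onPath_trans_not hG hno hd1) hxe
          have hnd : ¬ OnPath G d x c :=
            fun h => hdc (stmt6_onPath_antisymm hG h hcxd)
          exact (stmt6_onPath_trans_not hG (fun hh => hnd (stmt6_onPath_symm hh)) hx1) hc'
        calc (B d e').card ≤ ((B c e).erase d).card := Finset.card_le_card hsub
          _ = k - 1 := by rw [Finset.card_erase_of_mem hdB]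
      · have hsub : B d e' ⊆ (B c e)ᶜ := by
          intro x hx
          have hx1 : ¬ OnPath G d x e' := hBmem.mp hx
          have hxd : x ≠ d := hxd_mem x hx
          rw [Finset.mem_compl]
          intro hxB
          have hdxc : OnPath G d x c := f2 x hxB hxd
          exact (stmt6_onPath_trans_not hG hx1 (fun h => hc' (stmt6_onPath_symm h))) hdxc
        have hcompl : ((B c e)ᶜ : Finset X).card = n - k := by
          rw [Finset.card_compl, hn]
        have := Finset.card_le_card hsub
        omega
    have h1 : k ≤ F c :=
      Finset.le_sup (f := fun e => (B c e).card)
        (Finset.mem_erase.mpr ⟨hec, Finset.mem_univ e⟩)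
    have h2 : F d ≤ k - 1 :=
      Finset.sup_le (fun e' he' => hFd e' (Finset.mem_erase.mp he').1)
    have h3 : F c ≤ F d := hcmin d (Finset.mem_univ d)
    omega
  refine ⟨c, fun e hec => ?_⟩
  have hkey := key e hec
  set Gd : Finset X := Finset.univ.filter (fun x => x ≠ c ∧ x ≠ e ∧ OnPath G c x e) with hGd
  have hcover : (Finset.univ : Finset X) ⊆ (Gd ∪ B c e) ∪ {c} := by
    intro x _
    by_cases h1 : x = c
    · simp [h1]
    by_cases h2 : x ∈ B c e
    · simp [h2]
    have hON : OnPath G c x e := not_not.mp (fun h => h2 (hBmem.mpr h))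
    have hxe : x ≠ e := by rintro rfl; exact h2 (heB hec)
    have : x ∈ Gd := by
      simp only [hGd, Finset.mem_filter, Finset.mem_univ, true_and]
      exact ⟨h1, hxe, hON⟩
    simp [this]
  have hcard2 : 1 < Gd.card := by
    have hle := Finset.card_le_card hcover
    have hu := Finset.card_union_le (Gd ∪ B c e) ({c} : Finset X)
    have hu2 := Finset.card_union_le Gd (B c e)
    rw [Finset.card_univ] at hle
    have hsing : ({c} : Finset X).card = 1 := Finset.card_singleton c
    omega
  obtain ⟨b1, hb1, b2, hb2, hne⟩ := Finset.one_lt_card.mp hcard2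
  simp only [hGd, Finset.mem_filter, Finset.mem_univ, true_and] at hb1 hb2
  exact ⟨b1, b2, hne, hb1.1, hb1.2.1, hb2.1, hb2.2.1, hb1.2.2, hb2.2.2⟩

end Stmt6Aux

/-- on any tree with at least 5 vertices, a rich single-peaked set of
preferences violates the rotation property. -/


theorem stmt6 {X : Type*} [Fintype X] (hk : 5 ≤ Fintype.card X)
    (G : SimpleGraph X) (hG : G.IsTree)
    (D : Set (X → X → Prop)) (hD : ∀ P ∈ D, IsPref P) (hsp : ∀ P ∈ D, SPTree G P)
    (hrich : Rich D) : ¬ Rotation D := by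
  classical
  intro hrot
  haveI : Nonempty X := Fintype.card_pos_iff.mp (by omega)
  obtain ⟨c, hc⟩ := stmt6_exists_centroid hG hk
  obtain ⟨P, hPD, hPtop⟩ := hrich c
  have hP : IsStrictTotalOrder X P := hD P hPD
  obtain ⟨e, -, he⟩ := stmt6_exists_bot hP Finset.univ Finset.univ_nonempty
  have hbot : ∀ x, x ≠ e → P x e := fun x hx => he x (Finset.mem_univ x) hx
  have hec : e ≠ c := by
    rintro rfl
    obtain ⟨x, hx⟩ := Fintype.exists_ne_of_one_lt_card (by omega) e
    exact hP.irrefl x (hP.trans x e x (hbot x hx) (hPtop x hx))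
  obtain ⟨b1, b2, hb12, hb1c, hb1e, hb2c, hb2e, hob1, hob2⟩ := hc e hec
  have main : ∀ y z : X, y ≠ c → z ≠ c → z ≠ e → P y z → OnPath G c z e → False := by
    intro y z hyc hzc hze hyz honz
    obtain ⟨P', hP'D, hP'top⟩ := hrich z
    refine hrot c y z e ⟨P, hPD, hPtop y hyc, hyz, hbot z hze⟩
      ⟨P', hP'D, hP'top c (Ne.symm hzc), ?_⟩
    rcases hsp P' hP'D z c e hP'top honz with h | h
    · exact absurd h.symm hec
    · exact h
  rcases (show P b1 b2 ∨ b1 = b2 ∨ P b2 b1 by rcases em (P b1 b2) with h1 | h1; exact Or.inl h1; rcases em (P b2 b1) with h2 | h2; exact Or.inr (Or.inr h2); exact Or.inr (Or.inl (hP.trichotomous b1 b2 h1 h2))) with h | h | h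
  · exact main b1 b2 hb1c hb2c hb2e h hob2
  · exact absurd h hb12
  · exact main b2 b1 hb2c hb1c hb1e h hob1
end

section
/- Let T be a tree on a finite set X with |X| ≥ 3. Then the maximal single-peaked set of preferences S(T) (the set of all linear orders on X single-peaked with respect to T) does not satisfy the top dominance property. -/
section Stmt8Aux

open SimpleGraph Finset

variable {X : Type*} [Fintype X]

omit [Fintype X] in
/-- In a tree, a vertex on every path from `b` to `b'` (other than `b'` itself)
is strictly closer to `b`. -/
lemma dist_lt_of_onPath' {G : SimpleGraph X} (hG : G.IsTree) {a b b' : X}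
    (h : ∀ p : G.Walk b b', p.IsPath → a ∈ p.support) (hab' : a ≠ b') :
    G.dist b a < G.dist b b' := by
  classical
  obtain ⟨w, hw⟩ := hG.isConnected.exists_walk_length_eq_dist b b'
  have hp : w.bypass.IsPath := w.bypass_isPath
  have hlen : w.bypass.length = G.dist b b' :=
    le_antisymm (hw ▸ w.length_bypass_le) (G.dist_le _)
  have ha : a ∈ w.bypass.support := h _ hp
  have hspec := w.bypass.take_spec ha
  have hsum : (w.bypass.takeUntil a ha).length + (w.bypass.dropUntil a ha).length
      = G.dist b b' := by
    have := congrArg SimpleGraph.Walk.length hspec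
    rwa [SimpleGraph.Walk.length_append, hlen] at this
  have h1 : G.dist b a ≤ (w.bypass.takeUntil a ha).length := G.dist_le _
  have h2 : 0 < (w.bypass.dropUntil a ha).length := by
    rcases Nat.eq_zero_or_pos (w.bypass.dropUntil a ha).length with h | h
    · exact absurd (SimpleGraph.Walk.eq_of_length_eq_zero h) hab'
    · exact h
  omega

/-- Construction of a single-peaked preference with top `b` ranking `a` above `c`. -/
lemma key_pref' {G : SimpleGraph X} (hG : G.IsTree) (b a c : X)
    (hba : G.Adj b a) (hbc : G.Adj b c) (hac : a ≠ c)
    (e : X → ℕ) (he : Function.Injective e) (heN : ∀ u, e u < Fintype.card X)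
    (hord : e a < e c) :
    ∃ r : X → X → Prop, (IsPref r ∧ SPTree G r) ∧ r b a ∧ r a c := by
  set N := Fintype.card X with hN
  set f : X → ℕ := fun u => G.dist b u * N + e u with hf
  have hfinj : Function.Injective f := by
    intro u v huv
    simp only [hf] at huv
    by_cases hd : G.dist b u = G.dist b v
    · rw [hd] at huv
      exact he (by omega)
    · exfalso
      rcases lt_or_gt_of_ne hd with h | h
      · have := heN u; nlinarith
      · have := heN v; nlinarith
  have hmono : ∀ u v, G.dist b u < G.dist b v → f u < f v := by
    intro u v h
    have := heN u
    simp only [hf]; nlinarith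
  have hda : G.dist b a = 1 := SimpleGraph.dist_eq_one_iff_adj.mpr hba
  have hdc : G.dist b c = 1 := SimpleGraph.dist_eq_one_iff_adj.mpr hbc
  refine ⟨fun u v => f u < f v, ⟨?_, ?_⟩, ?_, ?_⟩
  · -- strict total order
    show IsStrictTotalOrder X _
    refine { irrefl := fun u h => lt_irrefl _ h,
             trans := fun u v w h1 h2 => lt_trans h1 h2, trichotomous := ?_ }
    intro u v
    rcases lt_trichotomy (f u) (f v) with h | h | h
    · exact fun h1 _ => absurd h h1
    · exact fun _ _ => hfinj h
    · exact fun _ h2 => absurd h h2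
  · -- single-peakedness
    intro t a' b' htop hpath
    have hdistb : ∀ y, y ≠ b → f b < f y := by
      intro y hy
      apply hmono
      rw [SimpleGraph.dist_self]
      exact hG.isConnected.pos_dist_of_ne (fun h => hy h.symm)
    have htb : t = b := by
      by_contra htb
      have h1 : f t < f b := htop b (fun h => htb h.symm)
      have h2 : f b < f t := hdistb t htb
      omega
    subst htb
    by_cases hab : a' = b'
    · exact Or.inl hab
    · exact Or.inr (hmono _ _ (dist_lt_of_onPath' hG hpath hab))
  · -- r b a
    apply hmono
    rw [SimpleGraph.dist_self, hda]
    omega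
  · -- r a c
    simp only [hf, hda, hdc]
    omega

end Stmt8Aux

/-- for a tree on at least 3 vertices, the maximal single-peaked set of
preferences does not satisfy top dominance. -/
theorem stmt8 {X : Type*} [Fintype X] (h3 : 3 ≤ Fintype.card X)
    (G : SimpleGraph X) (hG : G.IsTree) :
    ¬ TD {r : X → X → Prop | IsPref r ∧ SPTree G r} := by
  classical
  intro hTD
  obtain ⟨b, hb⟩ : ∃ b, 2 ≤ G.degree b := by
    by_contra h
    push_neg at h
    have hsum : ∑ v, G.degree v = 2 * G.edgeFinset.card :=
      SimpleGraph.sum_degrees_eq_twice_card_edges G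
    have hedge : G.edgeFinset.card + 1 = Fintype.card X := hG.card_edgeFinset
    have hle : ∑ v, G.degree v ≤ ∑ _v : X, 1 :=
      Finset.sum_le_sum (fun v _ => by have := h v; omega)
    rw [Finset.sum_const, smul_eq_mul, mul_one, Finset.card_univ] at hle
    omega
  obtain ⟨a, ha, c, hc, hac⟩ := Finset.one_lt_card.mp
    (show 1 < (G.neighborFinset b).card from by
      rw [SimpleGraph.card_neighborFinset_eq_degree]; omega)
  rw [SimpleGraph.mem_neighborFinset] at ha hc
  set e1 : X → ℕ := fun u => ((Fintype.equivFin X) u : ℕ) with he1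
  have he1inj : Function.Injective e1 :=
    Fin.val_injective.comp (Fintype.equivFin X).injective
  have he1N : ∀ u, e1 u < Fintype.card X := fun u => ((Fintype.equivFin X) u).is_lt
  set e2 : X → ℕ := e1 ∘ (Equiv.swap a c) with he2
  have he2inj : Function.Injective e2 := he1inj.comp (Equiv.swap a c).injective
  have he2N : ∀ u, e2 u < Fintype.card X := fun u => he1N _
  have he2a : e2 a = e1 c := by simp [he2, Equiv.swap_apply_left]
  have he2c : e2 c = e1 a := by simp [he2, Equiv.swap_apply_right]
  rcases (he1inj.ne_iff.mpr hac).lt_or_gt with hord | hord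
  · obtain ⟨r, hr, hrba, hrac⟩ := key_pref' hG b a c ha hc hac e1 he1inj he1N hord
    obtain ⟨r', hr', hrbc, hrca⟩ := key_pref' hG b c a hc ha hac.symm e2 he2inj he2N
      (by rw [he2a, he2c]; exact hord)
    exact hTD b a c ⟨r, hr, hrba, hrac⟩ ⟨r', hr', hrbc, hrca⟩
  · obtain ⟨r, hr, hrbc, hrca⟩ := key_pref' hG b c a hc ha hac.symm e1 he1inj he1N hord
    obtain ⟨r', hr', hrba, hrac⟩ := key_pref' hG b a c ha hc hac e2 he2inj he2N
      (by rw [he2a, he2c]; exact hord)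
    exact hTD b c a ⟨r, hr, hrbc, hrca⟩ ⟨r', hr', hrba, hrac⟩
end

section
/- Let X be a finite set with a tree T on X and let S(T) be the set of all linear orders on X single-peaked with respect to T. For any k with |X| = k, we have 2^(k-1) ≤ |S(T)| ≤ 2·(k-1)!, with the lower bound attained when T is a path and the upper bound attained when T is a star. -/
namespace SP9

open List SimpleGraph

variable {X : Type*}
/-- `Good G l`: every element of `l` is adjacent to some later element, except the last. -/
def Good (G : SimpleGraph X) : List X → Prop
  | [] => True
  | x :: s => (s = [] ∨ ∃ y ∈ s, G.Adj x y) ∧ Good G s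

def Full [Fintype X] (l : List X) : Prop := l.Nodup ∧ ∀ x : X, x ∈ l

/-- The strict order induced by a list (later = more preferred). -/
def LRel [DecidableEq X] (l : List X) (a b : X) : Prop := l.idxOf b < l.idxOf a

lemma good_append_right {G : SimpleGraph X} : ∀ {u l : List X}, Good G (u ++ l) → Good G l
  | [], _, h => h
  | _ :: u, l, h => good_append_right (u := u) h.2

lemma good_of_forall {G : SimpleGraph X} {l : List X}
    (h : ∀ u x s, l = u ++ x :: s → s ≠ [] → ∃ y ∈ s, G.Adj x y) : Good G l := by
  induction l with
  | nil => trivial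
  | cons x s ih =>
    refine ⟨?_, ih fun u y s' hs hne => h (x :: u) y s' (by simp [hs]) hne⟩
    rcases eq_or_ne s [] with rfl | hne
    · exact Or.inl rfl
    · exact Or.inr (h [] x s rfl hne)

lemma nodup_indexOf_get [DecidableEq X] {l : List X} (hl : l.Nodup) (i : ℕ) (hi : i < l.length) :
    l.idxOf l[i] = i := by
  have h1 : l.idxOf l[i] < l.length := idxOf_lt_length_iff.2 (getElem_mem hi)
  have := getElem_idxOf (x := l[i]) (xs := l) h1
  exact (List.Nodup.getElem_inj_iff hl).mp this

lemma indexOf_getLast [DecidableEq X] {l : List X} (hl : l.Nodup) (h : l ≠ []) :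
    l.idxOf (l.getLast h) = l.length - 1 := by
  have hlen : l.length - 1 < l.length := by
    have : 0 < l.length := List.length_pos_iff.2 h
    omega
  rw [List.getLast_eq_getElem]
  exact nodup_indexOf_get hl _ hlen


lemma LRel_irrefl [DecidableEq X] (l : List X) (a : X) : ¬ LRel l a a := by simp [LRel]

lemma LRel_trans [DecidableEq X] {l : List X} {a b c : X} (h1 : LRel l a b) (h2 : LRel l b c) :
    LRel l a c := lt_trans h2 h1

lemma LRel_trichotomy [DecidableEq X] [Fintype X] {l : List X} (hf : Full l) (a b : X) :
    LRel l a b ∨ a = b ∨ LRel l b a := by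
  rcases eq_or_ne a b with rfl | hne
  · exact Or.inr (Or.inl rfl)
  · have : l.idxOf a ≠ l.idxOf b := fun h =>
      hne ((List.idxOf_inj (hf.2 a)).mp h)
    rcases lt_or_gt_of_ne this with h | h
    · exact Or.inr (Or.inr h)
    · exact Or.inl h

lemma isPref_LRel [DecidableEq X] [Fintype X] {l : List X} (hf : Full l) :
    IsStrictTotalOrder X (LRel l) :=
  { trichotomous := fun a b h1 h2 => ((LRel_trichotomy hf a b).resolve_left h1).resolve_right h2
    irrefl := LRel_irrefl l
    trans := fun _ _ _ => LRel_trans }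


/-- Walk ends: previous neighbor of the last vertex. -/
lemma exists_adj_end {G : SimpleGraph X} {u v : X} (w : G.Walk u v) (hu : u ≠ v) :
    ∃ d, G.Adj d v ∧ d ∈ w.support ∧ d ≠ v := by
  induction w with
  | nil => exact absurd rfl hu
  | @cons a b c h r ih =>
    rcases eq_or_ne b c with rfl | hb
    · exact ⟨a, h, Walk.start_mem_support _, hu⟩
    · obtain ⟨d, hd1, hd2, hd3⟩ := ih hb
      exact ⟨d, hd1, by simp [Walk.support_cons, hd2], hd3⟩

lemma exists_adj_start {G : SimpleGraph X} {u v : X} (w : G.Walk u v) (hu : u ≠ v) :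
    ∃ d, G.Adj u d ∧ d ∈ w.support.tail := by
  cases w with
  | nil => exact absurd rfl hu
  | @cons a b c h r => exact ⟨b, h, by simp [Walk.support_cons]⟩

/-- The graph obtained by deleting vertex `x`. -/
def Gdel (G : SimpleGraph X) (x : X) : SimpleGraph {y : X // y ≠ x} :=
  G.comap Subtype.val

lemma gdel_adj {G : SimpleGraph X} {x : X} {a b : {y : X // y ≠ x}} :
    (Gdel G x).Adj a b ↔ G.Adj a.1 b.1 := Iff.rfl

/-- Lift a walk avoiding `x` to the deleted graph. -/
lemma lift_walk {G : SimpleGraph X} {x : X} {a b : X} (w : G.Walk a b)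
    (hw : ∀ v ∈ w.support, v ≠ x) (ha : a ≠ x) (hb : b ≠ x) :
    (Gdel G x).Reachable ⟨a, ha⟩ ⟨b, hb⟩ := by
  induction w with
  | nil => rfl
  | @cons a c b h r ih =>
    have hc : c ≠ x := hw c (by simp [Walk.support_cons, Walk.start_mem_support])
    have h1 : (Gdel G x).Adj ⟨a, ha⟩ ⟨c, hc⟩ := h
    exact (h1.reachable).trans (ih (fun v hv => hw v (by simp [Walk.support_cons, hv])) hc hb)

/-- Deleting a leaf from a tree yields a tree. -/
lemma gdel_isTree {G : SimpleGraph X} (hG : G.IsTree) {x c : X} (hxc : G.Adj x c)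
    (hc : ∀ d, G.Adj x d → d = c) : (Gdel G x).IsTree := by
  classical
  constructor
  · have hne : Nonempty {y : X // y ≠ x} := ⟨⟨c, fun h => G.irrefl (h ▸ hxc)⟩⟩
    rw [connected_iff]
    refine ⟨fun y z => ?_, hne⟩
    obtain ⟨w0⟩ := hG.isConnected.preconnected y.1 z.1
    set p : G.Walk y.1 z.1 := (w0.toPath : G.Path y.1 z.1).1 with hp
    have hpath : p.IsPath := w0.toPath.2
    have hx : x ∉ p.support := by
      intro hx
      -- decompose the path at x
      have hspec := p.take_spec hx
      have hy : y.1 ≠ x := y.2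
      have hz : x ≠ z.1 := fun h => z.2 h.symm
      obtain ⟨d1, hd1, hd1m, hd1x⟩ := exists_adj_end (p.takeUntil x hx) hy
      obtain ⟨d2, hd2, hd2m⟩ := exists_adj_start (p.dropUntil x hx) hz
      have hd1c : d1 = c := hc d1 hd1.symm
      have hd2c : d2 = c := hc d2 hd2
      have hnodup : ((p.takeUntil x hx).support ++ (p.dropUntil x hx).support.tail).Nodup := by
        rw [← Walk.support_append, hspec]; exact hpath.support_nodup
      have hdisj := (List.nodup_append'.mp hnodup).2.2
      exact hdisj (hd1c ▸ hd1m) (hd2c ▸ hd2m)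
    have : ∀ v ∈ p.support, v ≠ x := fun v hv h => hx (h ▸ hv)
    exact lift_walk p this y.2 z.2
  · intro v w hw
    have : (w.map (SimpleGraph.Hom.comap Subtype.val G)).IsCycle :=
      (Walk.map_isCycle_iff_of_injective (p := w) Subtype.val_injective).2 hw
    exact hG.IsAcyclic _ this

/-- Deleting a vertex with two distinct neighbors from a tree disconnects it. -/
lemma gdel_not_preconnected {G : SimpleGraph X} (hG : G.IsTree) {x a b : X}
    (hab : a ≠ b) (ha : G.Adj x a) (hb : G.Adj x b) :
    ¬ (Gdel G x).Preconnected := by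
  classical
  intro hpre
  have hax : a ≠ x := fun h => G.irrefl (h ▸ ha)
  have hbx : b ≠ x := fun h => G.irrefl (h ▸ hb)
  obtain ⟨w⟩ := hpre ⟨a, hax⟩ ⟨b, hbx⟩
  have hxs : x ∉ (w.map (SimpleGraph.Hom.comap Subtype.val G)).support := by
    rw [show (w.map (SimpleGraph.Hom.comap Subtype.val G)).support = w.support.map Subtype.val from Walk.support_map _ _]
    intro hx
    obtain ⟨v, _, hv2⟩ := List.mem_map.mp hx
    exact v.2 hv2
  have hxp1 : x ∉ ((w.map (SimpleGraph.Hom.comap Subtype.val G)).toPath : G.Path a b).1.support :=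
    fun h => hxs (Walk.support_toPath_subset _ h)
  have hp2path : (Walk.cons ha.symm (Walk.cons hb (Walk.nil))).IsPath := by
    rw [Walk.cons_isPath_iff, Walk.cons_isPath_iff]
    simp only [Walk.support_cons, Walk.support_nil, List.mem_cons, List.mem_singleton]
    refine ⟨⟨Walk.IsPath.nil, by tauto⟩, by push_neg; exact ⟨hax, hab, by simp⟩⟩
  have := hG.IsAcyclic.path_unique
    ((w.map (SimpleGraph.Hom.comap Subtype.val G)).toPath) ⟨_, hp2path⟩
  rw [this] at hxp1
  apply hxp1
  exact List.mem_cons_of_mem _ List.mem_cons_self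

lemma unique_nbr_of_degree_one [Fintype X] [DecidableEq X] {G : SimpleGraph X}
    [DecidableRel G.Adj] {a : X} (h : G.degree a = 1) :
    ∃ c, G.Adj a c ∧ ∀ d, G.Adj a d → d = c := by
  rw [← G.card_neighborFinset_eq_degree] at h
  obtain ⟨c, hc⟩ := Finset.card_eq_one.mp h
  refine ⟨c, ?_, fun d hd => ?_⟩
  · rw [← SimpleGraph.mem_neighborFinset, hc]; simp
  · have : d ∈ G.neighborFinset a := (SimpleGraph.mem_neighborFinset _ _ _).2 hd
    rwa [hc, Finset.mem_singleton] at this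

/-- A tree on at least two vertices has two distinct leaves. -/
lemma exists_two_leaves [Fintype X] {G : SimpleGraph X} (hG : G.IsTree)
    (h2 : 2 ≤ Fintype.card X) :
    ∃ a b : X, a ≠ b ∧ (∃ c, G.Adj a c ∧ ∀ d, G.Adj a d → d = c) ∧
      (∃ c, G.Adj b c ∧ ∀ d, G.Adj b d → d = c) := by
  classical
  have hdegpos : ∀ v : X, 0 < G.degree v := by
    intro v
    obtain ⟨w, hw⟩ := Fintype.exists_ne_of_one_lt_card (by omega) v
    obtain ⟨w0⟩ := hG.isConnected.preconnected v w
    obtain ⟨d, hd, _⟩ := exists_adj_start w0 (Ne.symm hw)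
    rw [G.degree_pos_iff_exists_adj]
    exact ⟨d, hd⟩
  have hsum : ∑ v : X, G.degree v = 2 * G.edgeFinset.card :=
    G.sum_degrees_eq_twice_card_edges
  have hedge : G.edgeFinset.card + 1 = Fintype.card X := hG.card_edgeFinset
  set L := Finset.univ.filter (fun v => G.degree v = 1) with hL
  have hLcard : 2 ≤ L.card := by
    by_contra hlt
    have k1 : L.card • 1 ≤ ∑ v ∈ L, G.degree v :=
      Finset.card_nsmul_le_sum L _ 1 (fun v _ => hdegpos v)
    have k2 : (Finset.univ \ L).card • 2 ≤ ∑ v ∈ Finset.univ \ L, G.degree v := by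
      refine Finset.card_nsmul_le_sum _ _ 2 (fun v hv => ?_)
      simp only [hL, Finset.mem_sdiff, Finset.mem_filter, Finset.mem_univ, true_and] at hv
      have := hdegpos v
      omega
    have hsplit : ∑ v ∈ Finset.univ \ L, G.degree v + ∑ v ∈ L, G.degree v
        = ∑ v : X, G.degree v := Finset.sum_sdiff (Finset.subset_univ L)
    have hc : (Finset.univ \ L).card + L.card = Fintype.card X := by
      rw [Finset.card_sdiff_of_subset (Finset.subset_univ L), Finset.card_univ]
      have := Finset.card_le_card (Finset.subset_univ L)
      rw [Finset.card_univ] at this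
      omega
    simp only [smul_eq_mul] at k1 k2
    omega
  obtain ⟨a, haL, b, hbL, hab⟩ := Finset.one_lt_card.mp hLcard
  simp only [hL, Finset.mem_filter, Finset.mem_univ, true_and] at haL hbL
  exact ⟨a, b, hab, unique_nbr_of_degree_one haL, unique_nbr_of_degree_one hbL⟩
/-- A tree on at least three vertices has a vertex with two distinct neighbors. -/
lemma exists_branch [Fintype X] {G : SimpleGraph X} (hG : G.IsTree)
    (h3 : 3 ≤ Fintype.card X) :
    ∃ x a b : X, a ≠ b ∧ G.Adj x a ∧ G.Adj x b := by
  classical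
  have hsum : ∑ v : X, G.degree v = 2 * G.edgeFinset.card :=
    G.sum_degrees_eq_twice_card_edges
  have hedge : G.edgeFinset.card + 1 = Fintype.card X := hG.card_edgeFinset
  have : ∃ x : X, 2 ≤ G.degree x := by
    by_contra hno
    push_neg at hno
    have : ∑ v : X, G.degree v ≤ ∑ _v : X, 1 :=
      Finset.sum_le_sum (fun v _ => by have := hno v; omega)
    simp [Finset.card_univ] at this
    omega
  obtain ⟨x, hx⟩ := this
  rw [← G.card_neighborFinset_eq_degree] at hx
  obtain ⟨a, ha, b, hb, hab⟩ := Finset.one_lt_card.mp hx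
  rw [SimpleGraph.mem_neighborFinset] at ha hb
  exact ⟨x, a, b, hab, ha, hb⟩



/-- From any member of a good list there is a walk to the last element staying in the list. -/
lemma good_walk {G : SimpleGraph X} : ∀ {l : List X} (hl : l ≠ []), Good G l → ∀ a ∈ l,
    ∃ w : G.Walk a (l.getLast hl), ∀ v ∈ w.support, v ∈ l := by
  intro l
  induction l with
  | nil => intro hl; exact absurd rfl hl
  | cons x s ih =>
    intro hl hg a ha
    rcases eq_or_ne s [] with rfl | hs
    · have hax : a = x := by simpa using ha
      subst hax
      exact ⟨Walk.nil, by simp⟩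
    · have hlast : (x :: s).getLast hl = s.getLast hs := List.getLast_cons hs
      rw [hlast]
      rcases List.mem_cons.mp ha with rfl | has
      · obtain ⟨y, hy, hadj⟩ := hg.1.resolve_left hs
        obtain ⟨w, hw⟩ := ih hs hg.2 y hy
        exact ⟨Walk.cons hadj w, by
          intro v hv
          rcases List.mem_cons.mp (by simpa [Walk.support_cons] using hv) with rfl | hv'
          · exact List.mem_cons_self
          · exact List.mem_cons_of_mem _ (hw v hv')⟩
      · obtain ⟨w, hw⟩ := ih hs hg.2 a has
        exact ⟨w, fun v hv => List.mem_cons_of_mem _ (hw v hv)⟩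

lemma full_good_preconnected [Fintype X] {G : SimpleGraph X} {l : List X}
    (hf : Full l) (hg : Good G l) : G.Preconnected := by
  intro a b
  have hl : l ≠ [] := fun h => by simpa [h] using hf.2 a
  obtain ⟨w1, -⟩ := good_walk hl hg a (hf.2 a)
  obtain ⟨w2, -⟩ := good_walk hl hg b (hf.2 b)
  exact ⟨w1.append w2.reverse⟩

/-- The number of single-peaked orders, counted via lists. -/
noncomputable def N [Fintype X] (G : SimpleGraph X) : ℕ :=
  {l : List X | Full l ∧ Good G l}.ncard

lemma finite_FG [Fintype X] (G : SimpleGraph X) : {l : List X | Full l ∧ Good G l}.Finite := by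
  classical
  refine Set.Finite.subset (Finset.univ.toList.permutations.toFinset : Finset (List X)).finite_toSet
    (fun l hl => ?_)
  simp only [Finset.coe_sort_coe, Finset.mem_coe, List.mem_toFinset, List.mem_permutations]
  exact (List.perm_ext_iff_of_nodup hl.1.1 (Finset.nodup_toList _)).2
    (fun a => by simp [hl.1.2 a, Finset.mem_toList])

lemma N_singleton [Fintype X] (G : SimpleGraph X) (h : Fintype.card X = 1) : N G = 1 := by
  obtain ⟨x, hx⟩ := Fintype.card_eq_one_iff.mp h
  have : {l : List X | Full l ∧ Good G l} = {[x]} := by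
    ext l
    simp only [Set.mem_setOf_eq, Set.mem_singleton_iff]
    constructor
    · rintro ⟨⟨hnd, hmem⟩, -⟩
      cases l with
      | nil => simpa using hmem x
      | cons a t =>
        have hax : a = x := hx a
        subst hax
        cases t with
        | nil => rfl
        | cons b t' =>
          exact absurd (hx b ▸ List.mem_cons_self (a := b) (l := t') : (a:X) ∈ b :: t')
            (by rw [hx b, hx a] at *; exact (List.nodup_cons.mp hnd).1)
    · rintro rfl
      exact ⟨⟨by simp, fun z => by simp [hx z]⟩, ⟨Or.inl rfl, trivial⟩⟩
  rw [N, this, Set.ncard_singleton]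

lemma N_not_preconnected [Fintype X] {G : SimpleGraph X} (h : ¬ G.Preconnected) : N G = 0 := by
  have : {l : List X | Full l ∧ Good G l} = ∅ := by
    ext l
    simp only [Set.mem_setOf_eq, Set.mem_empty_iff_false, iff_false, not_and]
    exact fun hf hg => h (full_good_preconnected hf hg)
  rw [N, this, Set.ncard_empty]

lemma good_map_val {x : X} {G : SimpleGraph X} : ∀ {s : List {y : X // y ≠ x}},
    Good (Gdel G x) s ↔ Good G (s.map Subtype.val) := by
  intro s
  induction s with
  | nil => simp [Good]
  | cons a t ih =>
    show (_ ∧ _) ↔ (_ ∧ _)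
    rw [← ih]
    apply and_congr_left'
    constructor
    · rintro (rfl | ⟨y, hy, hadj⟩)
      · exact Or.inl rfl
      · exact Or.inr ⟨y.1, List.mem_map_of_mem hy, hadj⟩
    · rintro (hnil | ⟨y, hy, hadj⟩)
      · exact Or.inl (by cases t <;> simp_all)
      · obtain ⟨y', hy', rfl⟩ := List.mem_map.mp hy
        exact Or.inr ⟨y', hy', hadj⟩

lemma N_rec [Fintype X] [DecidableEq X] (G : SimpleGraph X) (hcon : G.Connected) (h2 : 2 ≤ Fintype.card X) :
    N G = ∑ x : X, N (Gdel G x) := by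
  classical
  have hnbr : ∀ x : X, ∃ y, G.Adj x y := by
    intro x
    obtain ⟨w, hw⟩ := Fintype.exists_ne_of_one_lt_card (by omega) x
    obtain ⟨w0⟩ := hcon.preconnected x w
    obtain ⟨d, hd, -⟩ := exists_adj_start w0 (Ne.symm hw)
    exact ⟨d, hd⟩
  have : Nonempty X := Fintype.card_pos_iff.mp (by omega)
  inhabit X
  set S := (finite_FG G).toFinset with hS
  have hN : N G = S.card := Set.ncard_eq_toFinset_card _ (finite_FG G)
  rw [hN, Finset.card_eq_sum_card_fiberwise
    (f := fun l => l.headI) (t := Finset.univ) (fun l _ => Finset.mem_univ _)]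
  refine Finset.sum_congr rfl (fun x _ => ?_)
  rw [N, Set.ncard_eq_toFinset_card _ (finite_FG (Gdel G x))]
  refine (Finset.card_bij (fun s _ => x :: s.map Subtype.val) ?_ ?_ ?_).symm
  · -- maps into the fiber
    intro s hs
    simp only [Set.Finite.mem_toFinset, Set.mem_setOf_eq] at hs
    obtain ⟨⟨hnd, hmem⟩, hgood⟩ := hs
    simp only [hS, Finset.mem_filter, Set.Finite.mem_toFinset, Set.mem_setOf_eq]
    refine ⟨⟨⟨?_, ?_⟩, ?_, ?_⟩, rfl⟩
    · exact List.nodup_cons.mpr ⟨fun hx => by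
        obtain ⟨y, -, hy⟩ := List.mem_map.mp hx; exact y.2 hy,
        hnd.map Subtype.val_injective⟩
    · intro z
      rcases eq_or_ne z x with rfl | hz
      · exact List.mem_cons_self
      · exact List.mem_cons_of_mem _ (List.mem_map_of_mem (hmem ⟨z, hz⟩))
    · -- head adjacency clause
      rcases eq_or_ne (s.map Subtype.val) [] with hnil | hnil
      · exact Or.inl hnil
      · obtain ⟨y, hy⟩ := hnbr x
        have hyx : y ≠ x := fun h => G.irrefl (h ▸ hy)
        exact Or.inr ⟨y, List.mem_map_of_mem (hmem ⟨y, hyx⟩), hy⟩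
    · exact good_map_val.mp hgood
  · -- injective
    intro s1 h1 s2 h2 heq
    simp only [List.cons.injEq, true_and] at heq
    exact List.map_injective_iff.mpr Subtype.val_injective heq
  · -- surjective
    intro l hl
    simp only [hS, Finset.mem_filter, Set.Finite.mem_toFinset, Set.mem_setOf_eq] at hl
    obtain ⟨⟨⟨hnd, hmem⟩, hgood⟩, hhead⟩ := hl
    have hlne : l ≠ [] := fun h => by simpa [h] using hmem x
    obtain ⟨a, t, rfl⟩ := List.exists_cons_of_ne_nil hlne
    have hax : a = x := hhead
    subst hax
    have hxt : a ∉ t := (List.nodup_cons.mp hnd).1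
    have htne : ∀ z ∈ t, z ≠ a := fun z hz h => hxt (h ▸ hz)
    refine ⟨t.pmap Subtype.mk htne, ?_, ?_⟩
    · have hmap : (t.pmap (Subtype.mk : ∀ y : X, y ≠ a → {y // y ≠ a}) htne).map Subtype.val = t := by
        simp [List.map_pmap]
      simp only [Set.Finite.mem_toFinset, Set.mem_setOf_eq]
      refine ⟨⟨?_, ?_⟩, ?_⟩
      · exact (List.nodup_cons.mp hnd).2.pmap (fun _ _ _ _ h => congrArg Subtype.val h)
      · intro z
        have : z.1 ∈ a :: t := hmem z.1
        rcases List.mem_cons.mp this with h | h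
        · exact absurd h z.2
        · rw [List.mem_pmap]
          exact ⟨z.1, h, Subtype.ext rfl⟩
      · rw [good_map_val, hmap]
        exact hgood.2
    · simp [List.map_pmap]

lemma card_del [Fintype X] [DecidableEq X] (x : X) :
    Fintype.card {y : X // y ≠ x} = Fintype.card X - 1 := by
  simp [Fintype.card_subtype_compl (· = x)]

/-- Lower bound: `2^(n-1) ≤ N G` for a tree on `n` vertices. -/
lemma N_lower (n : ℕ) : ∀ {X : Type*} [Fintype X] (G : SimpleGraph X),
    G.IsTree → Fintype.card X = n → 2 ^ (n - 1) ≤ N G := by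
  induction n using Nat.strong_induction_on with
  | _ n IH =>
    intro X _ G hG hc
    classical
    rcases le_or_gt n 1 with h1 | h1
    · have hpos : 1 ≤ n := hc ▸ Fintype.card_pos_iff.mpr hG.isConnected.nonempty
      have : n = 1 := by omega
      subst this
      rw [N_singleton G hc]
      simp
    · rw [N_rec G hG.isConnected (by omega)]
      obtain ⟨a, b, hab, ⟨ca, hca, hca'⟩, ⟨cb, hcb, hcb'⟩⟩ :=
        exists_two_leaves hG (by omega)
      have hta : (Gdel G a).IsTree := gdel_isTree hG hca hca'
      have htb : (Gdel G b).IsTree := gdel_isTree hG hcb hcb'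
      have hIHa : 2 ^ (n - 2) ≤ N (Gdel G a) := by
        have := IH (n-1) (by omega) (Gdel G a) hta (by rw [card_del, hc])
        simpa [show n - 1 - 1 = n - 2 by omega] using this
      have hIHb : 2 ^ (n - 2) ≤ N (Gdel G b) := by
        have := IH (n-1) (by omega) (Gdel G b) htb (by rw [card_del, hc])
        simpa [show n - 1 - 1 = n - 2 by omega] using this
      have hsub : ({a, b} : Finset X) ⊆ Finset.univ := Finset.subset_univ _
      have hle : ∑ x ∈ ({a, b} : Finset X), N (Gdel G x) ≤ ∑ x : X, N (Gdel G x) :=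
        Finset.sum_le_sum_of_subset hsub
      rw [Finset.sum_pair hab] at hle
      have : 2 ^ (n - 1) ≤ 2 ^ (n - 2) + 2 ^ (n - 2) := by
        have : 2 ^ (n - 1) = 2 ^ (n - 2) * 2 := by
          rw [← pow_succ]
          congr 1
          omega
        omega
      omega

/-- Upper bound: `N G ≤ 2·(n-1)!` for a tree on `n` vertices. -/
lemma N_upper (n : ℕ) : ∀ {X : Type*} [Fintype X] (G : SimpleGraph X),
    G.IsTree → Fintype.card X = n → N G ≤ 2 * (n - 1).factorial := by
  induction n using Nat.strong_induction_on with
  | _ n IH =>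
    intro X _ G hG hc
    classical
    have hpos : 1 ≤ n := hc ▸ Fintype.card_pos_iff.mpr hG.isConnected.nonempty
    rcases le_or_gt n 1 with h1 | h1
    · have : n = 1 := by omega
      subst this
      rw [N_singleton G hc]
      simp [Nat.factorial]
    · -- n ≥ 2
      have hbound : ∀ x : X, N (Gdel G x) ≤ 2 * (n - 2).factorial := by
        intro x
        by_cases hpre : (Gdel G x).Preconnected
        · have hne : Nonempty {y : X // y ≠ x} := by
            rw [← Fintype.card_pos_iff, card_del, hc]; omega
          have htree : (Gdel G x).IsTree :=
            ⟨(connected_iff _).mpr ⟨hpre, hne⟩, fun v w hw =>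
              hG.IsAcyclic _ ((Walk.map_isCycle_iff_of_injective (p := w)
                (f := SimpleGraph.Hom.comap Subtype.val G) Subtype.val_injective).2 hw)⟩
          have := IH (n-1) (by omega) (Gdel G x) htree (by rw [card_del, hc])
          simpa [show n - 1 - 1 = n - 2 by omega] using this
        · rw [N_not_preconnected hpre]
          omega
      rcases eq_or_lt_of_le (show 2 ≤ n by omega) with h2 | h3
      · -- n = 2 : N = sum of two singleton counts = 2
        rw [N_rec G hG.isConnected (by omega)]
        have hone : ∀ x : X, N (Gdel G x) = 1 := fun x =>
          N_singleton _ (by rw [card_del, hc, ← h2])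
        rw [Finset.sum_congr rfl (fun x _ => hone x)]
        simp [← h2, Finset.card_univ, hc, Nat.factorial]
      · -- n ≥ 3
        obtain ⟨c, u, v, huv, hcu, hcv⟩ := exists_branch hG (by omega)
        have hczero : N (Gdel G c) = 0 :=
          N_not_preconnected (gdel_not_preconnected hG huv hcu hcv)
        rw [N_rec G hG.isConnected (by omega)]
        have : ∑ x : X, N (Gdel G x) = ∑ x ∈ Finset.univ.erase c, N (Gdel G x) := by
          rw [← Finset.add_sum_erase _ _ (Finset.mem_univ c), hczero, zero_add]
        rw [this]
        calc ∑ x ∈ Finset.univ.erase c, N (Gdel G x)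
            ≤ ∑ _x ∈ Finset.univ.erase c, 2 * (n - 2).factorial :=
              Finset.sum_le_sum (fun x _ => hbound x)
          _ = (n - 1) * (2 * (n - 2).factorial) := by
              rw [Finset.sum_const, smul_eq_mul, Finset.card_erase_of_mem (Finset.mem_univ c),
                Finset.card_univ, hc]
          _ = 2 * (n - 1).factorial := by
              have : (n - 1).factorial = (n - 1) * (n - 2).factorial := by
                have : n - 1 = (n - 2) + 1 := by omega
                rw [this, Nat.factorial_succ]
              rw [this]
              ring

/-- Exact count for stars. -/
lemma N_star (n : ℕ) : ∀ {X : Type*} [Fintype X] (G : SimpleGraph X),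
    G.IsTree → IsStarG G → Fintype.card X = n → 2 ≤ n → N G = 2 * (n - 1).factorial := by
  induction n using Nat.strong_induction_on with
  | _ n IH =>
    intro X _ G hG hstar hc h2
    classical
    obtain ⟨c, hst⟩ := hstar
    rcases eq_or_lt_of_le h2 with h2' | h3
    · -- n = 2
      rw [N_rec G hG.isConnected (by omega)]
      have hone : ∀ x : X, N (Gdel G x) = 1 := fun x =>
        N_singleton _ (by rw [card_del, hc, ← h2'])
      rw [Finset.sum_congr rfl (fun x _ => hone x)]
      simp [← h2', Finset.card_univ, hc, Nat.factorial]
    · -- n ≥ 3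
      have hczero : N (Gdel G c) = 0 := by
        have hcard : 2 ≤ (Finset.univ.erase c).card := by
          rw [Finset.card_erase_of_mem (Finset.mem_univ c), Finset.card_univ, hc]
          omega
        obtain ⟨u, hu, v, hv, huv⟩ := Finset.one_lt_card.mp hcard
        have hu' : u ≠ c := Finset.ne_of_mem_erase hu
        have hv' : v ≠ c := Finset.ne_of_mem_erase hv
        exact N_not_preconnected (gdel_not_preconnected hG huv
          ((hst c u).mpr ⟨Ne.symm hu', Or.inl rfl⟩)
          ((hst c v).mpr ⟨Ne.symm hv', Or.inl rfl⟩))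
      have hleaf : ∀ x : X, x ≠ c → N (Gdel G x) = 2 * (n - 2).factorial := by
        intro x hx
        have hadjxc : G.Adj x c := (hst x c).mpr ⟨hx, Or.inr rfl⟩
        have huniq : ∀ d, G.Adj x d → d = c := by
          intro d hd
          rcases ((hst x d).mp hd).2 with h | h
          · exact absurd h hx
          · exact h
        have htree : (Gdel G x).IsTree := gdel_isTree hG hadjxc huniq
        have hstar' : IsStarG (Gdel G x) := by
          refine ⟨⟨c, Ne.symm hx⟩, fun a b => ?_⟩
          rw [gdel_adj, hst]
          constructor
          · rintro ⟨h1, h2⟩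
            exact ⟨fun h => h1 (congrArg Subtype.val h),
              h2.imp (fun h => Subtype.ext h) (fun h => Subtype.ext h)⟩
          · rintro ⟨h1, h2⟩
            exact ⟨fun h => h1 (Subtype.ext h),
              h2.imp (fun h => congrArg Subtype.val h) (fun h => congrArg Subtype.val h)⟩
        have := IH (n-1) (by omega) (Gdel G x) htree hstar'
          (by rw [card_del, hc]) (by omega)
        simpa [show n - 1 - 1 = n - 2 by omega] using this
      rw [N_rec G hG.isConnected (by omega)]
      have hsplit : ∑ x : X, N (Gdel G x) = ∑ x ∈ Finset.univ.erase c, N (Gdel G x) := by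
        rw [← Finset.add_sum_erase _ _ (Finset.mem_univ c), hczero, zero_add]
      rw [hsplit, Finset.sum_congr rfl
        (fun x hx => hleaf x (Finset.ne_of_mem_erase hx))]
      rw [Finset.sum_const, smul_eq_mul, Finset.card_erase_of_mem (Finset.mem_univ c),
        Finset.card_univ, hc]
      have hfac : (n - 1).factorial = (n - 1) * (n - 2).factorial := by
        have h' : n - 1 = (n - 2) + 1 := by omega
        rw [h', Nat.factorial_succ]
      rw [hfac]
      ring

lemma path_rev {n : ℕ} {G : SimpleGraph X} (e : X ≃ Fin n)
    (hadj : ∀ a b, G.Adj a b ↔ ((e a : ℕ) + 1 = e b ∨ (e b : ℕ) + 1 = e a)) :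
    ∀ a b, G.Adj a b ↔
      (((e.trans (Fin.revPerm)) a : ℕ) + 1 = (e.trans (Fin.revPerm)) b ∨
       ((e.trans (Fin.revPerm)) b : ℕ) + 1 = (e.trans (Fin.revPerm)) a) := by
  intro a b
  rw [hadj]
  have ha : (e a : ℕ) < n := (e a).2
  have hb : (e b : ℕ) < n := (e b).2
  simp only [Equiv.trans_apply, Fin.revPerm_apply, Fin.val_rev]
  omega

lemma ne_zero_of_ne_symm {n : ℕ} (e : X ≃ Fin n) (h0 : 0 < n)
    {y : X} (hy : y ≠ e.symm ⟨0, h0⟩) : (e y : ℕ) ≠ 0 := by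
  intro h
  apply hy
  apply e.injective
  rw [e.apply_symm_apply]
  exact Fin.ext h

/-- The equivalence witnessing that deleting the first endpoint leaves a path. -/
def delEquiv {n : ℕ} (e : X ≃ Fin n) (h0 : 0 < n) :
    {y : X // y ≠ e.symm ⟨0, h0⟩} ≃ Fin (n - 1) where
  toFun y := ⟨(e y.1 : ℕ) - 1, by
    have h1 := ne_zero_of_ne_symm e h0 y.2
    have h2 := (e y.1).2
    omega⟩
  invFun i := ⟨e.symm ⟨(i : ℕ) + 1, by have := i.2; omega⟩, fun h => by
    have := congrArg e h
    rw [e.apply_symm_apply, e.apply_symm_apply] at this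
    exact absurd (congrArg Fin.val this) (by simp)⟩
  left_inv y := by
    apply Subtype.ext
    apply e.injective
    simp only [Equiv.apply_symm_apply]
    apply Fin.ext
    have h1 := ne_zero_of_ne_symm e h0 y.2
    simp only [Fin.val_mk]
    omega
  right_inv i := by
    apply Fin.ext
    simp only [Equiv.apply_symm_apply, Fin.val_mk]
    simp

lemma delEquiv_val {n : ℕ} (e : X ≃ Fin n) (h0 : 0 < n)
    (y : {y : X // y ≠ e.symm ⟨0, h0⟩}) : (delEquiv e h0 y : ℕ) = (e y.1 : ℕ) - 1 := rfl

/-- Deleting the first endpoint of a path. -/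
lemma path_del_first {n : ℕ} [Fintype X] {G : SimpleGraph X} (e : X ≃ Fin n)
    (hadj : ∀ a b, G.Adj a b ↔ ((e a : ℕ) + 1 = e b ∨ (e b : ℕ) + 1 = e a))
    (h2 : 2 ≤ n) :
    (∃ c, G.Adj (e.symm ⟨0, by omega⟩) c ∧ ∀ d, G.Adj (e.symm ⟨0, by omega⟩) d → d = c) ∧
      IsPathG (Gdel G (e.symm ⟨0, by omega⟩)) (n - 1) := by
  have hex : e (e.symm ⟨0, by omega⟩) = ⟨0, by omega⟩ := e.apply_symm_apply _
  constructor
  · refine ⟨e.symm ⟨1, by omega⟩, ?_, ?_⟩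
    · rw [hadj, hex, e.apply_symm_apply]
      exact Or.inl rfl
    · intro d hd
      rw [hadj, hex] at hd
      simp only at hd
      have h' : (e d : ℕ) = 1 := by omega
      have h'' : e d = ⟨1, by omega⟩ := Fin.ext h'
      rw [← h'', Equiv.symm_apply_apply]
  · refine ⟨delEquiv e (by omega), fun a b => ?_⟩
    rw [gdel_adj, hadj, delEquiv_val, delEquiv_val]
    have ha := ne_zero_of_ne_symm e (by omega : 0 < n) a.2
    have hb := ne_zero_of_ne_symm e (by omega : 0 < n) b.2
    have ha2 : (e a.1 : ℕ) < n := (e a.1).2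
    have hb2 : (e b.1 : ℕ) < n := (e b.1).2
    constructor
    · rintro (h | h)
      · exact Or.inl (by omega)
      · exact Or.inr (by omega)
    · rintro (h | h)
      · exact Or.inl (by omega)
      · exact Or.inr (by omega)

/-- Exact count for paths. -/
lemma N_path (n : ℕ) : ∀ {X : Type*} [Fintype X] (G : SimpleGraph X),
    G.IsTree → IsPathG G n → Fintype.card X = n → N G = 2 ^ (n - 1) := by
  induction n using Nat.strong_induction_on with
  | _ n IH =>
    intro X _ G hG hpath hc
    classical
    have hpos : 1 ≤ n := hc ▸ Fintype.card_pos_iff.mpr hG.isConnected.nonempty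
    rcases le_or_gt n 1 with h1 | h1
    · have : n = 1 := by omega
      subst this
      rw [N_singleton G hc]
      simp
    · obtain ⟨e, hadj⟩ := hpath
      have h2 : 2 ≤ n := h1
      set a := e.symm ⟨0, by omega⟩ with haa
      set b := e.symm ⟨n - 1, by omega⟩ with hbb
      have hab : a ≠ b := by
        intro h
        have := congrArg e h
        rw [e.apply_symm_apply, e.apply_symm_apply] at this
        have := congrArg Fin.val this
        simp at this
        omega
      -- endpoint a
      have hA := path_del_first e hadj h2
      have htreeA : (Gdel G a).IsTree := by
        obtain ⟨⟨c, hc1, hc2⟩, -⟩ := hA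
        exact gdel_isTree hG hc1 hc2
      have hNa : N (Gdel G a) = 2 ^ (n - 2) := by
        have := IH (n-1) (by omega) (Gdel G a) htreeA hA.2 (by rw [card_del, hc])
        simpa [show n - 1 - 1 = n - 2 by omega] using this
      -- endpoint b
      have hB := path_del_first (e.trans Fin.revPerm) (path_rev e hadj) h2
      have hbeq : (e.trans Fin.revPerm).symm ⟨0, by omega⟩ = b := by
        rw [hbb, Equiv.symm_trans_apply]
        congr 1
      rw [hbeq] at hB
      have htreeB : (Gdel G b).IsTree := by
        obtain ⟨⟨c, hc1, hc2⟩, -⟩ := hB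
        exact gdel_isTree hG hc1 hc2
      have hNb : N (Gdel G b) = 2 ^ (n - 2) := by
        have := IH (n-1) (by omega) (Gdel G b) htreeB hB.2 (by rw [card_del, hc])
        simpa [show n - 1 - 1 = n - 2 by omega] using this
      -- interior vertices give zero
      have hzero : ∀ x : X, x ∉ ({a, b} : Finset X) → N (Gdel G x) = 0 := by
        intro x hx
        simp only [Finset.mem_insert, Finset.mem_singleton] at hx
        push_neg at hx
        have hx0 : (e x : ℕ) ≠ 0 := by
          intro h
          apply hx.1
          have h' : e x = (⟨0, by omega⟩ : Fin n) := Fin.ext h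
          rw [haa, ← h', Equiv.symm_apply_apply]
        have hxn : (e x : ℕ) ≠ n - 1 := by
          intro h
          apply hx.2
          have h' : e x = (⟨n - 1, by omega⟩ : Fin n) := Fin.ext h
          rw [hbb, ← h', Equiv.symm_apply_apply]
        have hlt : (e x : ℕ) < n := (e x).2
        set u := e.symm ⟨(e x : ℕ) - 1, by omega⟩ with hu
        set v := e.symm ⟨(e x : ℕ) + 1, by omega⟩ with hv
        have huv : u ≠ v := by
          intro h
          have := congrArg (fun z => (e z : ℕ)) h
          simp only [hu, hv, e.apply_symm_apply] at this
          omega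
        have hxu : G.Adj x u := by
          rw [hadj, hu, e.apply_symm_apply]
          exact Or.inr (by simp; omega)
        have hxv : G.Adj x v := by
          rw [hadj, hv, e.apply_symm_apply]
          exact Or.inl (by simp)
        exact N_not_preconnected (gdel_not_preconnected hG huv hxu hxv)
      rw [N_rec G hG.isConnected (by omega)]
      have hsum : ∑ x ∈ ({a, b} : Finset X), N (Gdel G x) = ∑ x : X, N (Gdel G x) :=
        Finset.sum_subset (Finset.subset_univ _) (fun x _ hx => hzero x hx)
      rw [← hsum, Finset.sum_pair hab, hNa, hNb]
      have : 2 ^ (n - 1) = 2 ^ (n - 2) * 2 := by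
        rw [← pow_succ]
        congr 1
        omega
      omega

section Correspondence
variable [Fintype X] [DecidableEq X]

lemma topOf_LRel {l : List X} (hf : Full l) (hl : l ≠ []) : TopOf (LRel l) (l.getLast hl) := by
  intro y hy
  have h1 : l.idxOf (l.getLast hl) = l.length - 1 := indexOf_getLast hf.1 hl
  have h2 : l.idxOf y < l.length := idxOf_lt_length_iff.2 (hf.2 y)
  have h3 : l.idxOf y ≠ l.idxOf (l.getLast hl) := fun h =>
    hy ((List.idxOf_inj (hf.2 y)).mp h)
  show l.idxOf y < l.idxOf (l.getLast hl)
  omega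

lemma eq_getLast_of_topOf {l : List X} (hf : Full l) (hl : l ≠ []) {t : X}
    (ht : TopOf (LRel l) t) : t = l.getLast hl := by
  by_contra h
  have := ht (l.getLast hl) (fun hh => h hh.symm)
  have h1 : l.idxOf (l.getLast hl) = l.length - 1 := indexOf_getLast hf.1 hl
  have h2 : l.idxOf t < l.length := idxOf_lt_length_iff.2 (hf.2 t)
  have h3 : l.idxOf (l.getLast hl) < l.idxOf t := this
  omega

lemma getLast_eq_of_eq {l l' : List X} (h : l = l') (hl : l ≠ []) (hl' : l' ≠ []) :
    l.getLast hl = l'.getLast hl' := by subst h; rfl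

lemma good_walk' {G : SimpleGraph X} {l : List X} (hl : l ≠ []) (hg : Good G l) {a z : X}
    (ha : a ∈ l) (hz : l.getLast hl = z) : ∃ w : G.Walk a z, ∀ v ∈ w.support, v ∈ l := by
  subst hz
  exact good_walk hl hg a ha

lemma mem_drop_indexOf_ge {l : List X} (hnd : l.Nodup) {a : X} {m : ℕ} (ha : a ∈ l.drop m) :
    m ≤ l.idxOf a := by
  have hsplit : l.take m ++ l.drop m = l := List.take_append_drop m l
  have hnd' : (l.take m ++ l.drop m).Nodup := by rw [hsplit]; exact hnd
  have hdisj := (List.nodup_append'.mp hnd').2.2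
  have hnotmem : a ∉ l.take m := fun h => hdisj h ha
  have : l.idxOf a = (l.take m).length + (l.drop m).idxOf a := by
    conv_lhs => rw [← hsplit]
    exact List.idxOf_append_of_notMem hnotmem
  have hlen : m ≤ l.length := by
    by_contra hlt
    push_neg at hlt
    rw [List.drop_eq_nil_of_le (le_of_lt hlt)] at ha
    simp at ha
  rw [List.length_take] at this
  omega

lemma sptree_of_good {G : SimpleGraph X} {l : List X} (hf : Full l) (hg : Good G l) :
    SPTree G (LRel l) := by
  intro t a b ht hpath
  by_contra hcon
  push_neg at hcon
  obtain ⟨hab, hnr⟩ := hcon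
  have hl : l ≠ [] := fun h => by simpa [h] using hf.2 a
  have htl : t = l.getLast hl := eq_getLast_of_topOf hf hl ht
  have hidx : l.idxOf a < l.idxOf b := by
    have h1 : ¬ (l.idxOf b < l.idxOf a) := hnr
    have h2 : l.idxOf a ≠ l.idxOf b := fun h =>
      hab ((List.idxOf_inj (hf.2 a)).mp h)
    omega
  set n := l.idxOf b with hn
  have hnlen : n < l.length := idxOf_lt_length_iff.2 (hf.2 b)
  have hgetb : l[n] = b := getElem_idxOf hnlen
  have hdec : l = l.take n ++ (b :: l.drop (n + 1)) := by
    conv_lhs => rw [← List.take_append_drop n l, List.drop_eq_getElem_cons hnlen, hgetb]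
  have hgs : Good G (b :: l.drop (n + 1)) := good_append_right (hdec ▸ hg)
  have hsufne : (b :: l.drop (n + 1)) ≠ [] := List.cons_ne_nil _ _
  have hlast : (b :: l.drop (n + 1)).getLast hsufne = t := by
    rw [htl, getLast_eq_of_eq hdec hl (by rw [← hdec]; exact hl)]
    exact (List.getLast_append_of_right_ne_nil _ _ hsufne).symm
  obtain ⟨w, hw⟩ := good_walk' hsufne hgs (List.mem_cons_self) hlast
  have hanotin : a ∉ b :: l.drop (n + 1) := by
    intro hmem
    rcases List.mem_cons.mp hmem with rfl | hmem'
    · exact hab rfl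
    · have := mem_drop_indexOf_ge hf.1 hmem'
      omega
  have hp := hpath (w.reverse.toPath : G.Path t b).1 (w.reverse.toPath).2
  have : a ∈ w.reverse.support := Walk.support_toPath_subset _ hp
  rw [Walk.support_reverse, List.mem_reverse] at this
  exact hanotin (hw a this)

lemma good_of_sptree {G : SimpleGraph X} (hG : G.IsTree) {l : List X} (hf : Full l)
    (hsp : SPTree G (LRel l)) : Good G l := by
  apply good_of_forall
  intro u x s hdec hsne
  have hl : l ≠ [] := by rw [hdec]; simp
  have htop := topOf_LRel hf hl
  have hxu : x ∉ u := by
    have hnd := hf.1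
    rw [hdec] at hnd
    exact fun h => (List.nodup_append'.mp hnd).2.2 h (List.mem_cons_self)
  have hix : l.idxOf x = u.length := by
    rw [hdec, List.idxOf_append_of_notMem hxu, List.idxOf_cons_self]
    omega
  have hxt : x ≠ l.getLast hl := by
    intro h
    have h1 : l.idxOf x = l.length - 1 := h ▸ indexOf_getLast hf.1 hl
    have h2 : l.length = u.length + (s.length + 1) := by rw [hdec]; simp
    have h3 : 0 < s.length := List.length_pos_iff.2 hsne
    omega
  have htx : l.getLast hl ≠ x := Ne.symm hxt
  obtain ⟨w0⟩ := hG.isConnected.preconnected (l.getLast hl) x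
  set p : G.Walk (l.getLast hl) x := (w0.toPath : G.Path _ _).1 with hp
  have hppath : p.IsPath := (w0.toPath).2
  obtain ⟨d, hdadj, hdmem, hdx⟩ := exists_adj_end p htx
  have honpath : OnPath G d (l.getLast hl) x := by
    intro q hq
    have := (hG.existsUnique_path (l.getLast hl) x).unique hq hppath
    rw [this]
    exact hdmem
  have := hsp (l.getLast hl) d x htop honpath
  rcases this with h | h
  · exact absurd h hdx
  · have hdix : l.idxOf x < l.idxOf d := h
    have hdmem' : d ∈ l := hf.2 d
    rw [hdec] at hdmem'
    rcases List.mem_append.mp hdmem' with hdu | hds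
    · have : l.idxOf d = u.idxOf d := by
        rw [hdec]; exact List.idxOf_append_of_mem hdu
      have h2 : u.idxOf d < u.length := idxOf_lt_length_iff.2 hdu
      omega
    · rcases List.mem_cons.mp hds with rfl | hds'
      · exact absurd rfl hdx
      · exact ⟨d, hds', hdadj.symm⟩

lemma LRel_inj {l l' : List X} (hf : Full l) (hf' : Full l') (h : LRel l = LRel l') :
    l = l' := by
  set R : X → X → Prop := fun a b => a = b ∨ LRel l b a with hR
  haveI : IsAntisymm X R := ⟨by
    rintro a b (rfl | h1) (h2 | h2)
    · rfl
    · rfl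
    · exact h2.symm
    · exact absurd (LRel_trans h1 h2) (LRel_irrefl l b)⟩
  have hsorted : ∀ (m : List X), Full m → LRel m = LRel l → m.Pairwise R := by
    intro m hm hrel
    rw [List.pairwise_iff_getElem]
    intro i j hi hj hij
    right
    rw [← hrel]
    show m.idxOf m[i] < m.idxOf m[j]
    rw [nodup_indexOf_get hm.1 i hi, nodup_indexOf_get hm.1 j hj]
    exact hij
  have hperm : l ~ l' := (List.perm_ext_iff_of_nodup hf.1 hf'.1).2
    (fun a => by simp [hf.2 a, hf'.2 a])
  exact List.Perm.eq_of_pairwise' (hsorted l hf rfl) (hsorted l' hf' h.symm) hperm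

lemma exists_full_list (r : X → X → Prop) (hr : IsPref r) :
    ∃ l : List X, Full l ∧ LRel l = r := by
  classical
  have htri : ∀ a b : X, r a b ∨ a = b ∨ r b a := fun a b => by
    haveI : IsStrictTotalOrder X r := hr
    exact trichotomous a b
  have htrans : ∀ a b c : X, r a b → r b c → r a c := fun a b c =>
    hr.toIsStrictOrder.toIsTrans.trans a b c
  have hirr : ∀ a : X, ¬ r a a := fun a => by
    haveI : IsStrictTotalOrder X r := hr
    exact irrefl a
  set le' : X → X → Prop := fun a b => a = b ∨ r b a with hle
  haveI : IsTrans X le' := ⟨by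
    rintro a b c (rfl | h1) (rfl | h2)
    · exact Or.inl rfl
    · exact Or.inr h2
    · exact Or.inr h1
    · exact Or.inr (htrans c b a h2 h1)⟩
  haveI : IsAntisymm X le' := ⟨by
    rintro a b (rfl | h1) (h2 | h2)
    · rfl
    · rfl
    · exact h2.symm
    · exact absurd (htrans a b a h2 h1) (hirr a)⟩
  haveI : IsTotal X le' := ⟨by
    intro a b
    rcases htri a b with h | h | h
    · exact Or.inr (Or.inr h)
    · exact Or.inl (Or.inl h)
    · exact Or.inl (Or.inr h)⟩
  set l := Finset.univ.sort le' with hlist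
  have hmem : ∀ a : X, a ∈ l := fun a => (Finset.mem_sort le').2 (Finset.mem_univ a)
  have hnd : l.Nodup := Finset.sort_nodup _ le'
  have hsorted : l.Pairwise le' := Finset.pairwise_sort _ le'
  refine ⟨l, ⟨hnd, hmem⟩, ?_⟩
  have hpair : ∀ a b : X, l.idxOf a < l.idxOf b → le' a b := by
    intro a b hab
    have hia : l.idxOf a < l.length := idxOf_lt_length_iff.2 (hmem a)
    have hib : l.idxOf b < l.length := idxOf_lt_length_iff.2 (hmem b)
    have := (List.pairwise_iff_getElem.mp hsorted) _ _ hia hib hab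
    rwa [getElem_idxOf hia, getElem_idxOf hib] at this
  funext a b
  apply propext
  constructor
  · intro h
    have hab : b ≠ a := fun hh => by
      subst hh
      exact absurd h (LRel_irrefl l b)
    rcases hpair b a h with h' | h'
    · exact absurd h' hab
    · exact h'
  · intro h
    have hab : a ≠ b := fun hh => hirr a (hh ▸ h)
    have hne : l.idxOf a ≠ l.idxOf b := fun hh =>
      hab ((List.idxOf_inj (hmem a)).mp hh)
    rcases lt_or_gt_of_ne hne with h' | h'
    · rcases hpair a b h' with h'' | h''
      · exact absurd h'' hab
      · exact absurd (htrans a b a h h'') (hirr a)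
    · exact h'

lemma count_eq (G : SimpleGraph X) (hG : G.IsTree) :
    {r : X → X → Prop | IsPref r ∧ SPTree G r}.ncard = N G := by
  have him : {r : X → X → Prop | IsPref r ∧ SPTree G r}
      = LRel '' {l : List X | Full l ∧ Good G l} := by
    ext r
    simp only [Set.mem_setOf_eq, Set.mem_image]
    constructor
    · rintro ⟨hp, hsp⟩
      obtain ⟨l, hfull, hrel⟩ := exists_full_list r hp
      refine ⟨l, ⟨hfull, good_of_sptree hG hfull ?_⟩, hrel⟩
      rw [hrel]
      exact hsp
    · rintro ⟨l, ⟨hfull, hgood⟩, rfl⟩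
      exact ⟨isPref_LRel hfull, sptree_of_good hfull hgood⟩
  rw [him, Set.ncard_image_of_injOn (fun l hl l' hl' h => LRel_inj hl.1 hl'.1 h)]
  rfl

end Correspondence

end SP9

/-- `2^(k-1) ≤ |S(T)| ≤ 2·(k-1)!`, with the lower bound attained by paths and
the upper bound attained by stars. -/
theorem stmt9 {X : Type*} [Fintype X] (k : ℕ) (hcard : Fintype.card X = k)
    (G : SimpleGraph X) (hG : G.IsTree) :
    2 ^ (k - 1) ≤ {r : X → X → Prop | IsPref r ∧ SPTree G r}.ncard ∧
    {r : X → X → Prop | IsPref r ∧ SPTree G r}.ncard ≤ 2 * (k - 1).factorial ∧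
    (IsPathG G k → {r : X → X → Prop | IsPref r ∧ SPTree G r}.ncard = 2 ^ (k - 1)) ∧
    (2 ≤ k → IsStarG G →
      {r : X → X → Prop | IsPref r ∧ SPTree G r}.ncard = 2 * (k - 1).factorial) := by
  classical
  rw [SP9.count_eq G hG]
  exact ⟨SP9.N_lower k G hG hcard, SP9.N_upper k G hG hcard,
    fun hp => SP9.N_path k G hG hp hcard,
    fun h2 hs => SP9.N_star k G hG hs hcard h2⟩
end

section
/- In a marriage market with n men and n women where every agent has a strict preference over all agents of the other side, for any preference profile the men-proposing deferred acceptance algorithm terminates and produces a stable matching (a perfect matching with no blocking pair). -/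

lemma sto_trans {X : Type*} {r : X → X → Prop} (h : IsStrictTotalOrder X r)
    {a b c : X} (h1 : r a b) (h2 : r b c) : r a c := h.trans a b c h1 h2

lemma sto_asymm {X : Type*} {r : X → X → Prop} (h : IsStrictTotalOrder X r)
    {a b : X} (h1 : r a b) : ¬ r b a := fun h2 => h.irrefl a (h.trans a b a h1 h2)

lemma exists_best {X : Type*} [DecidableEq X] {r : X → X → Prop} (h : IsStrictTotalOrder X r)
    (s : Finset X) (hs : s.Nonempty) : ∃ b ∈ s, ∀ x ∈ s, x ≠ b → r b x := by
  classical
  induction s using Finset.induction_on with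
  | empty => exact absurd hs (by simp)
  | @insert a s ha ih =>
    by_cases hs' : s.Nonempty
    · obtain ⟨b, hb, hbest⟩ := ih hs'
      rcases (show r a b ∨ a = b ∨ r b a from if h1 : r a b then Or.inl h1 else if h2 : r b a then Or.inr (Or.inr h2) else Or.inr (Or.inl (h.trichotomous a b h1 h2))) with hab | rfl | hba
      · refine ⟨a, Finset.mem_insert_self _ _, fun x hx hxa => ?_⟩
        rcases Finset.mem_insert.1 hx with rfl | hx
        · exact absurd rfl hxa
        · by_cases hxb : x = b
          · exact hxb ▸ hab
          · exact sto_trans h hab (hbest x hx hxb)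
      · exact ⟨a, Finset.mem_insert_self _ _, fun x hx hxa => by
          rcases Finset.mem_insert.1 hx with rfl | hx
          · exact absurd rfl hxa
          · exact hbest x hx hxa⟩
      · refine ⟨b, Finset.mem_insert_of_mem hb, fun x hx hxb => ?_⟩
        rcases Finset.mem_insert.1 hx with rfl | hx
        · exact hba
        · exact hbest x hx hxb
    · obtain rfl := Finset.not_nonempty_iff_eq_empty.1 hs'
      exact ⟨a, by simp, fun x hx hxa => by simp at hx; exact absurd hx hxa⟩

/-- for every profile of strict preferences there is a stable matching
(the outcome of the men-proposing deferred acceptance algorithm). -/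
theorem stmt10 {n : ℕ} (p : Profile n)
    (hm : ∀ m, IsStrictTotalOrder (Fin n) (p.1 m))
    (hw : ∀ w, IsStrictTotalOrder (Fin n) (p.2 w)) :
    ∃ μ : Fin n ≃ Fin n, StableAt p μ := by
  classical
  -- Invariant: if w is not available to m, some man m' has w as his unique best
  -- available woman, and w prefers m' to m.
  set Inv : (Fin n → Finset (Fin n)) → Prop := fun A =>
    ∀ m w, w ∉ A m → ∃ m', w ∈ A m' ∧ (∀ x ∈ A m', x ≠ w → p.1 m' w x) ∧ p.2 w m' m
    with hInv
  suffices H : ∀ N (A : Fin n → Finset (Fin n)), (∑ m, (A m).card) ≤ N → Inv A →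
      ∃ μ : Fin n ≃ Fin n, StableAt p μ by
    exact H (∑ m : Fin n, (Finset.univ : Finset (Fin n)).card) (fun _ => Finset.univ)
      le_rfl (fun m w hweird => absurd (Finset.mem_univ w) hweird)
  intro N
  induction N using Nat.strong_induction_on with
  | _ N IH =>
  intro A hcard hI
  -- every man has a nonempty set of available women
  have hne : ∀ m, (A m).Nonempty := by
    intro m
    by_contra hcon
    have hAm : A m = ∅ := Finset.not_nonempty_iff_eq_empty.1 hcon
    have hall : ∀ w : Fin n, w ∉ A m := fun w => by simp [hAm]
    choose g hg1 hg2 _ using fun w => hI m w (hall w)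
    have hginj : Function.Injective g := by
      intro w1 w2 h12
      by_contra hne12
      exact sto_asymm (hm (g w1)) (hg2 w1 w2 (h12 ▸ hg1 w2) (Ne.symm hne12))
        (by rw [h12]; exact hg2 w2 w1 (h12 ▸ hg1 w1) hne12)
    obtain ⟨w, hwm⟩ := (Finite.injective_iff_surjective.1 hginj) m
    have := hg1 w
    rw [hwm] at this
    simp [hAm] at this
  -- each man's current proposal: his best available woman
  choose f hf1 hf2 using fun m => exists_best (hm m) (A m) (hne m)
  by_cases hinj : Function.Injective f
  · -- f is a stable matching
    have hbij : Function.Bijective f := ⟨hinj, Finite.injective_iff_surjective.1 hinj⟩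
    refine ⟨Equiv.ofBijective f hbij, ?_⟩
    intro m w ⟨hb1, hb2⟩
    have hμm : (Equiv.ofBijective f hbij) m = f m := rfl
    rw [hμm] at hb1
    have hwfm : w ≠ f m := fun h => (hm m).irrefl w (h ▸ hb1)
    by_cases hwA : w ∈ A m
    · exact sto_asymm (hm m) hb1 (hf2 m w hwA hwfm)
    · obtain ⟨m', hm'1, hm'2, hm'3⟩ := hI m w hwA
      have hfm' : f m' = w := by
        by_contra hfne
        exact sto_asymm (hm m') (hm'2 (f m') (hf1 m') hfne)
          (hf2 m' w hm'1 (fun h => hfne h.symm))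
      have hsymm : (Equiv.ofBijective f hbij).symm w = m' := by
        apply hinj
        rw [hfm']
        exact Equiv.ofBijective_apply_symm_apply f hbij w
      rw [hsymm] at hb2
      exact sto_asymm (hw w) hb2 hm'3
  · -- rejection round
    set prop : Fin n → Finset (Fin n) := fun w => Finset.univ.filter (fun m => f m = w)
      with hprop
    have hmemprop : ∀ m, m ∈ prop (f m) := fun m => by simp [hprop]
    have hpropne : ∀ m, (prop (f m)).Nonempty := fun m => ⟨m, hmemprop m⟩
    -- held man of each woman who has proposers
    have hbp : ∀ w : Fin n, (prop w).Nonempty →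
        ∃ b ∈ prop w, ∀ x ∈ prop w, x ≠ b → p.2 w b x := fun w hw' =>
      exists_best (hw w) (prop w) hw'
    classical
    set h : Fin n → Fin n := fun w =>
      if hne' : (prop w).Nonempty then (hbp w hne').choose else w with hh
    have hhmem : ∀ w (hne' : (prop w).Nonempty), h w ∈ prop w := by
      intro w hne'
      rw [hh]; simp only [dif_pos hne']
      exact (hbp w hne').choose_spec.1
    have hhbest : ∀ w (hne' : (prop w).Nonempty), ∀ x ∈ prop w, x ≠ h w → p.2 w (h w) x := by
      intro w hne'
      rw [hh]; simp only [dif_pos hne']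
      exact (hbp w hne').choose_spec.2
    have hfh : ∀ m, f (h (f m)) = f m := by
      intro m
      have := hhmem (f m) (hpropne m)
      simpa [hprop] using this
    set A' : Fin n → Finset (Fin n) := fun m =>
      if m = h (f m) then A m else (A m).erase (f m) with hA'
    have hA'held : ∀ m, A' (h (f m)) = A (h (f m)) := by
      intro m
      simp [hA', hfh m]
    have hsub : ∀ m, A' m ⊆ A m := by
      intro m
      simp only [hA']
      split
      · exact Finset.Subset.refl _
      · exact Finset.erase_subset _ _
    -- the invariant is preserved
    have hI' : Inv A' := by
      intro m w hw'
      by_cases hwA : w ∈ A m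
      · -- m was just rejected by w = f m
        have hcase : m ≠ h (f m) ∧ w = f m := by
          by_cases hc : m = h (f m)
          · simp only [hA', if_pos hc] at hw'; exact absurd hwA hw'
          · simp only [hA', if_neg hc] at hw'
            refine ⟨hc, ?_⟩
            by_contra hwfm
            exact hw' (Finset.mem_erase.2 ⟨hwfm, hwA⟩)
        obtain ⟨hmh, rfl⟩ := hcase
        refine ⟨h (f m), ?_, ?_, ?_⟩
        · have h1 := hf1 (h (f m))
          rw [hfh m] at h1
          rwa [hA'held m]
        · intro x hx hxw
          rw [hA'held m] at hx
          have := hf2 (h (f m)) x hx (by rw [hfh m]; exact hxw)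
          rwa [hfh m] at this
        · exact hhbest (f m) (hpropne m) m (hmemprop m) hmh
      · -- w was already unavailable to m
        obtain ⟨m', hm'1, hm'2, hm'3⟩ := hI m w hwA
        have hfm' : f m' = w := by
          by_contra hfne
          exact sto_asymm (hm m') (hm'2 (f m') (hf1 m') hfne)
            (hf2 m' w hm'1 (fun hq => hfne hq.symm))
        have hm'prop : m' ∈ prop w := by simp [hprop, hfm']
        have hwprop : (prop w).Nonempty := ⟨m', hm'prop⟩
        have hhw : p.2 w (h w) m := by
          by_cases hc : m' = h w
          · exact hc ▸ hm'3
          · exact sto_trans (hw w) (hhbest w hwprop m' hm'prop hc) hm'3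
        have hfhw : f (h w) = w := by
          have := hhmem w hwprop
          simpa [hprop] using this
        have hAeq : A' (h w) = A (h w) := by simp [hA', hfhw]
        refine ⟨h w, ?_, ?_, hhw⟩
        · have h1 := hf1 (h w)
          rw [hfhw] at h1
          rwa [hAeq]
        · intro x hx hxw
          rw [hAeq] at hx
          have := hf2 (h w) x hx (by rw [hfhw]; exact hxw)
          rwa [hfhw] at this
    -- the measure strictly decreases
    have hlt : (∑ m, (A' m).card) < ∑ m, (A m).card := by
      simp only [Function.Injective, not_forall] at hinj
      obtain ⟨m1, m2, hf12, hne12⟩ := hinj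
      have hex : ∃ m0, m0 ≠ h (f m0) := by
        by_cases hc : m1 = h (f m1)
        · refine ⟨m2, ?_⟩
          intro hc2
          exact hne12 (by rw [hc, hc2, hf12])
        · exact ⟨m1, hc⟩
      obtain ⟨m0, hm0⟩ := hex
      refine Finset.sum_lt_sum (fun i _ => Finset.card_le_card (hsub i)) ⟨m0, Finset.mem_univ _, ?_⟩
      have : A' m0 = (A m0).erase (f m0) := by simp only [hA', if_neg hm0]
      rw [this]
      exact Finset.card_erase_lt_of_mem (hf1 m0)
    exact IH (∑ m, (A' m).card) (lt_of_lt_of_le hlt hcard) A' le_rfl hI'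
end

section
/- Consider a marriage market with n ≥ 3 men and n women. Suppose the men's common preference set contains orders P1, P2, P3 with w2 P1 w1 P1 w3, w2 P2 w3 P2 w1, w1 P3 w2 P3 w3, and the women's common preference set contains orders Q1, Q2, Q3 with m2 Q1 m1 Q1 m3, m2 Q2 m3 Q2 m1, m1 Q3 m2 Q3 m3, and both sets are rich. Then no stable matching rule on the resulting anonymous product domain is strategy-proof. -/
section Aux11

variable {n : ℕ}

private lemma aux11_low (μ : Fin n ≃ Fin n)
    (hfix : ∀ i : Fin n, 3 ≤ (i : ℕ) → μ i = i) :
    ∀ j : Fin n, (j : ℕ) < 3 → ((μ j : ℕ) < 3) := by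
  intro j hj
  by_contra h
  push_neg at h
  have h2 : μ j = j := μ.injective (hfix (μ j) h)
  have h3 := congrArg Fin.val h2
  omega

private lemma aux11_fix (q : Profile n) (μ : Fin n ≃ Fin n) (hst : StableAt q μ)
    (htop : ∀ i : Fin n, 3 ≤ (i : ℕ) → TopOf (q.1 i) i ∧ TopOf (q.2 i) i) :
    ∀ i : Fin n, 3 ≤ (i : ℕ) → μ i = i := by
  intro i hi
  by_contra hne
  have hs : μ.symm i ≠ i := by
    intro h
    have h' := congrArg μ h
    rw [Equiv.apply_symm_apply] at h'
    exact hne h'.symm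
  exact hst i i ⟨(htop i hi).1 (μ i) hne, (htop i hi).2 (μ.symm i) hs⟩

private lemma aux11_L1 (hn : 3 ≤ n) (q : Profile n) (μ : Fin n ≃ Fin n)
    (hst : StableAt q μ) (hfix : ∀ i : Fin n, 3 ≤ (i : ℕ) → μ i = i)
    (F1 : q.1 ⟨0, by linarith⟩ ⟨1, by linarith⟩ ⟨2, by linarith⟩)
    (F2 : q.1 ⟨1, by linarith⟩ ⟨0, by linarith⟩ ⟨2, by linarith⟩)
    (F3 : q.1 ⟨2, by linarith⟩ ⟨0, by linarith⟩ ⟨2, by linarith⟩)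
    (F4 : q.2 ⟨0, by linarith⟩ ⟨2, by linarith⟩ ⟨0, by linarith⟩)
    (F5 : q.2 ⟨0, by linarith⟩ ⟨1, by linarith⟩ ⟨0, by linarith⟩)
    (F6 : q.2 ⟨0, by linarith⟩ ⟨1, by linarith⟩ ⟨2, by linarith⟩)
    (F7 : q.2 ⟨1, by linarith⟩ ⟨0, by linarith⟩ ⟨1, by linarith⟩) :
    μ ⟨1, by linarith⟩ = ⟨0, by linarith⟩ := by
  set i0 : Fin n := ⟨0, by linarith⟩ with hi0
  set i1 : Fin n := ⟨1, by linarith⟩ with hi1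
  set i2 : Fin n := ⟨2, by linarith⟩ with hi2
  have v0 : (i0 : ℕ) = 0 := rfl
  have v1 : (i1 : ℕ) = 1 := rfl
  have v2 : (i2 : ℕ) = 2 := rfl
  have hblk : ∀ m w : Fin n, q.1 m w (μ m) → q.2 w m (μ.symm w) → False :=
    fun m w ha hb => hst m w ⟨ha, hb⟩
  have fe : ∀ a b : Fin n, (a : ℕ) = (b : ℕ) → a = b := fun a b h => Fin.ext h
  have l0 : (μ i0 : ℕ) < 3 := aux11_low μ hfix i0 (by omega)
  have l1 : (μ i1 : ℕ) < 3 := aux11_low μ hfix i1 (by omega)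
  have l2 : (μ i2 : ℕ) < 3 := aux11_low μ hfix i2 (by omega)
  have dne : ∀ a b : Fin n, (a : ℕ) ≠ (b : ℕ) → (μ a : ℕ) ≠ (μ b : ℕ) := by
    intro a b hab h
    exact hab (congrArg Fin.val (μ.injective (Fin.ext h)))
  have d01 := dne i0 i1 (by omega)
  have d02 := dne i0 i2 (by omega)
  have d12 := dne i1 i2 (by omega)
  rcases (show (μ i1 : ℕ) = 0 ∨ (μ i1 : ℕ) = 1 ∨ (μ i1 : ℕ) = 2 by omega) with b | b | b
  · exact fe (μ i1) i0 (by omega)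
  · exfalso
    rcases (show (μ i0 : ℕ) = 0 ∨ (μ i0 : ℕ) = 2 by omega) with a | a
    · have e0 : μ i0 = i0 := fe _ _ (by omega)
      have e2 : μ i2 = i2 := fe _ _ (by omega)
      have s0 : μ.symm i0 = i0 := (Equiv.symm_apply_eq μ).mpr e0.symm
      exact hblk i2 i0 (by rw [e2]; exact F3) (by rw [s0]; exact F4)
    · have e0 : μ i0 = i2 := fe _ _ (by omega)
      have e1 : μ i1 = i1 := fe _ _ (by omega)
      have s1 : μ.symm i1 = i1 := (Equiv.symm_apply_eq μ).mpr e1.symm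
      exact hblk i0 i1 (by rw [e0]; exact F1) (by rw [s1]; exact F7)
  · exfalso
    have e1 : μ i1 = i2 := fe _ _ (by omega)
    rcases (show (μ i0 : ℕ) = 0 ∨ (μ i0 : ℕ) = 1 by omega) with a | a
    · have e0 : μ i0 = i0 := fe _ _ (by omega)
      have s0 : μ.symm i0 = i0 := (Equiv.symm_apply_eq μ).mpr e0.symm
      exact hblk i1 i0 (by rw [e1]; exact F2) (by rw [s0]; exact F5)
    · have e2 : μ i2 = i0 := fe _ _ (by omega)
      have s0 : μ.symm i0 = i2 := (Equiv.symm_apply_eq μ).mpr e2.symm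
      exact hblk i1 i0 (by rw [e1]; exact F2) (by rw [s0]; exact F6)

private lemma aux11_L2 (hn : 3 ≤ n) (q : Profile n) (μ : Fin n ≃ Fin n)
    (hst : StableAt q μ) (hfix : ∀ i : Fin n, 3 ≤ (i : ℕ) → μ i = i)
    (G1 : q.1 ⟨1, by linarith⟩ ⟨1, by linarith⟩ ⟨2, by linarith⟩)
    (G2 : q.2 ⟨1, by linarith⟩ ⟨1, by linarith⟩ ⟨2, by linarith⟩)
    (G3 : q.1 ⟨0, by linarith⟩ ⟨0, by linarith⟩ ⟨1, by linarith⟩)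
    (G4 : q.2 ⟨0, by linarith⟩ ⟨0, by linarith⟩ ⟨2, by linarith⟩)
    (G5 : q.1 ⟨1, by linarith⟩ ⟨2, by linarith⟩ ⟨0, by linarith⟩)
    (G6 : q.2 ⟨2, by linarith⟩ ⟨1, by linarith⟩ ⟨2, by linarith⟩)
    (G7 : q.1 ⟨0, by linarith⟩ ⟨1, by linarith⟩ ⟨2, by linarith⟩)
    (G8 : q.2 ⟨1, by linarith⟩ ⟨0, by linarith⟩ ⟨2, by linarith⟩) :
    μ ⟨1, by linarith⟩ = ⟨1, by linarith⟩ := by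
  set i0 : Fin n := ⟨0, by linarith⟩ with hi0
  set i1 : Fin n := ⟨1, by linarith⟩ with hi1
  set i2 : Fin n := ⟨2, by linarith⟩ with hi2
  have v0 : (i0 : ℕ) = 0 := rfl
  have v1 : (i1 : ℕ) = 1 := rfl
  have v2 : (i2 : ℕ) = 2 := rfl
  have hblk : ∀ m w : Fin n, q.1 m w (μ m) → q.2 w m (μ.symm w) → False :=
    fun m w ha hb => hst m w ⟨ha, hb⟩
  have fe : ∀ a b : Fin n, (a : ℕ) = (b : ℕ) → a = b := fun a b h => Fin.ext h
  have l0 : (μ i0 : ℕ) < 3 := aux11_low μ hfix i0 (by omega)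
  have l1 : (μ i1 : ℕ) < 3 := aux11_low μ hfix i1 (by omega)
  have l2 : (μ i2 : ℕ) < 3 := aux11_low μ hfix i2 (by omega)
  have dne : ∀ a b : Fin n, (a : ℕ) ≠ (b : ℕ) → (μ a : ℕ) ≠ (μ b : ℕ) := by
    intro a b hab h
    exact hab (congrArg Fin.val (μ.injective (Fin.ext h)))
  have d01 := dne i0 i1 (by omega)
  have d02 := dne i0 i2 (by omega)
  have d12 := dne i1 i2 (by omega)
  rcases (show (μ i1 : ℕ) = 0 ∨ (μ i1 : ℕ) = 1 ∨ (μ i1 : ℕ) = 2 by omega) with b | b | b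
  · exfalso
    have e1 : μ i1 = i0 := fe _ _ (by omega)
    rcases (show (μ i0 : ℕ) = 1 ∨ (μ i0 : ℕ) = 2 by omega) with a | a
    · -- (1,0,2) : block (m1, w2)
      have e2 : μ i2 = i2 := fe _ _ (by omega)
      have s2 : μ.symm i2 = i2 := (Equiv.symm_apply_eq μ).mpr e2.symm
      exact hblk i1 i2 (by rw [e1]; exact G5) (by rw [s2]; exact G6)
    · -- (2,0,1) : block (m0, w1)
      have e0 : μ i0 = i2 := fe _ _ (by omega)
      have e2 : μ i2 = i1 := fe _ _ (by omega)
      have s1 : μ.symm i1 = i2 := (Equiv.symm_apply_eq μ).mpr e2.symm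
      exact hblk i0 i1 (by rw [e0]; exact G7) (by rw [s1]; exact G8)
  · exact fe (μ i1) i1 (by omega)
  · exfalso
    have e1 : μ i1 = i2 := fe _ _ (by omega)
    rcases (show (μ i0 : ℕ) = 0 ∨ (μ i0 : ℕ) = 1 by omega) with a | a
    · -- (0,2,1) : block (m1, w1)
      have e2 : μ i2 = i1 := fe _ _ (by omega)
      have s1 : μ.symm i1 = i2 := (Equiv.symm_apply_eq μ).mpr e2.symm
      exact hblk i1 i1 (by rw [e1]; exact G1) (by rw [s1]; exact G2)
    · -- (1,2,0) : block (m0, w0)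
      have e0 : μ i0 = i1 := fe _ _ (by omega)
      have e2 : μ i2 = i0 := fe _ _ (by omega)
      have s0 : μ.symm i0 = i2 := (Equiv.symm_apply_eq μ).mpr e2.symm
      exact hblk i0 i0 (by rw [e0]; exact G3) (by rw [s0]; exact G4)

end Aux11

/-- with the six specified admissible orders present in a rich anonymous
domain, no stable matching rule is strategy-proof. Here `m_i = ⟨i-1,_⟩`, `w_j = ⟨j-1,_⟩`. -/
theorem stmt11 {n : ℕ} (hn : 3 ≤ n) (Dm Dw : Set (PrefRel n))
    (hDm : ∀ P ∈ Dm, IsPref P) (hDw : ∀ P ∈ Dw, IsPref P)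
    (hrm : Rich Dm) (hrw : Rich Dw)
    (P1 P2 P3 : PrefRel n) (hP1 : P1 ∈ Dm) (hP2 : P2 ∈ Dm) (hP3 : P3 ∈ Dm)
    (Q1 Q2 Q3 : PrefRel n) (hQ1 : Q1 ∈ Dw) (hQ2 : Q2 ∈ Dw) (hQ3 : Q3 ∈ Dw)
    (h1 : P1 ⟨1, by omega⟩ ⟨0, by omega⟩ ∧ P1 ⟨0, by omega⟩ ⟨2, by omega⟩)
    (h2 : P2 ⟨1, by omega⟩ ⟨2, by omega⟩ ∧ P2 ⟨2, by omega⟩ ⟨0, by omega⟩)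
    (h3 : P3 ⟨0, by omega⟩ ⟨1, by omega⟩ ∧ P3 ⟨1, by omega⟩ ⟨2, by omega⟩)
    (h4 : Q1 ⟨1, by omega⟩ ⟨0, by omega⟩ ∧ Q1 ⟨0, by omega⟩ ⟨2, by omega⟩)
    (h5 : Q2 ⟨1, by omega⟩ ⟨2, by omega⟩ ∧ Q2 ⟨2, by omega⟩ ⟨0, by omega⟩)
    (h6 : Q3 ⟨0, by omega⟩ ⟨1, by omega⟩ ∧ Q3 ⟨1, by omega⟩ ⟨2, by omega⟩)
    (φ : Profile n → (Fin n ≃ Fin n)) (hst : StableRule Dm Dw φ) :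
    ¬ SP Dm Dw φ := by
  intro hsp
  classical
  choose R hRmem hRtop using hrm
  choose S hSmem hStop using hrw
  set i0 : Fin n := ⟨0, by omega⟩ with hi0
  set i1 : Fin n := ⟨1, by omega⟩ with hi1
  set i2 : Fin n := ⟨2, by omega⟩ with hi2
  have v0 : (i0 : ℕ) = 0 := rfl
  have v1 : (i1 : ℕ) = 1 := rfl
  have v2 : (i2 : ℕ) = 2 := rfl
  have ne01 : i0 ≠ i1 := Fin.ne_of_val_ne (by omega)
  have ne02 : i0 ≠ i2 := Fin.ne_of_val_ne (by omega)
  have ne12 : i1 ≠ i2 := Fin.ne_of_val_ne (by omega)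
  have ne10 : i1 ≠ i0 := ne01.symm
  -- transitivity facts
  have trP3 : P3 i0 i2 := by
    have h : IsStrictTotalOrder (Fin n) P3 := hDm P3 hP3
    exact h.toIsStrictOrder.toIsTrans.trans _ _ _ h3.1 h3.2
  have trQ1 : Q1 i1 i2 := by
    have h : IsStrictTotalOrder (Fin n) Q1 := hDw Q1 hQ1
    exact h.toIsStrictOrder.toIsTrans.trans _ _ _ h4.1 h4.2
  have trQ2 : Q2 i1 i0 := by
    have h : IsStrictTotalOrder (Fin n) Q2 := hDw Q2 hQ2
    exact h.toIsStrictOrder.toIsTrans.trans _ _ _ h5.1 h5.2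
  have trQ3 : Q3 i0 i2 := by
    have h : IsStrictTotalOrder (Fin n) Q3 := hDw Q3 hQ3
    exact h.toIsStrictOrder.toIsTrans.trans _ _ _ h6.1 h6.2
  -- the profiles
  set M : Fin n → PrefRel n :=
    Function.update (Function.update (Function.update R i0 P3) i1 P1) i2 P3 with hM
  set W : Fin n → PrefRel n :=
    Function.update (Function.update (Function.update S i0 Q1) i1 Q3) i2 Q3 with hW
  set p : Profile n := (M, W) with hp
  set p' : Profile n := (p.1, Function.update p.2 i0 Q2) with hp'
  set t : Profile n := (Function.update p.1 i1 P2, p.2) with ht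
  -- evaluation lemmas
  have hM0 : M i0 = P3 := by
    rw [hM, Function.update_of_ne ne02, Function.update_of_ne ne01, Function.update_self]
  have hM1 : M i1 = P1 := by
    rw [hM, Function.update_of_ne ne12, Function.update_self]
  have hM2 : M i2 = P3 := by rw [hM, Function.update_self]
  have hW0 : W i0 = Q1 := by
    rw [hW, Function.update_of_ne ne02, Function.update_of_ne ne01, Function.update_self]
  have hW1 : W i1 = Q3 := by
    rw [hW, Function.update_of_ne ne12, Function.update_self]
  have hW2 : W i2 = Q3 := by rw [hW, Function.update_self]
  have hMhigh : ∀ m : Fin n, 3 ≤ (m : ℕ) → M m = R m := by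
    intro m hm
    rw [hM, Function.update_of_ne (Fin.ne_of_val_ne (by omega)),
      Function.update_of_ne (Fin.ne_of_val_ne (by omega)),
      Function.update_of_ne (Fin.ne_of_val_ne (by omega))]
  have hWhigh : ∀ w : Fin n, 3 ≤ (w : ℕ) → W w = S w := by
    intro w hw
    rw [hW, Function.update_of_ne (Fin.ne_of_val_ne (by omega)),
      Function.update_of_ne (Fin.ne_of_val_ne (by omega)),
      Function.update_of_ne (Fin.ne_of_val_ne (by omega))]
  -- domain facts
  have hMdom : ∀ m, M m ∈ Dm := by
    intro m
    by_cases e2 : m = i2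
    · rw [e2, hM2]; exact hP3
    · by_cases e1 : m = i1
      · rw [e1, hM1]; exact hP1
      · by_cases e0 : m = i0
        · rw [e0, hM0]; exact hP3
        · have k0 : (m : ℕ) ≠ 0 := fun h => e0 (Fin.ext (by omega))
          have k1 : (m : ℕ) ≠ 1 := fun h => e1 (Fin.ext (by omega))
          have k2 : (m : ℕ) ≠ 2 := fun h => e2 (Fin.ext (by omega))
          rw [hMhigh m (by omega)]; exact hRmem m
  have hWdom : ∀ w, W w ∈ Dw := by
    intro w
    by_cases e2 : w = i2
    · rw [e2, hW2]; exact hQ3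
    · by_cases e1 : w = i1
      · rw [e1, hW1]; exact hQ3
      · by_cases e0 : w = i0
        · rw [e0, hW0]; exact hQ1
        · have k0 : (w : ℕ) ≠ 0 := fun h => e0 (Fin.ext (by omega))
          have k1 : (w : ℕ) ≠ 1 := fun h => e1 (Fin.ext (by omega))
          have k2 : (w : ℕ) ≠ 2 := fun h => e2 (Fin.ext (by omega))
          rw [hWhigh w (by omega)]; exact hSmem w
  have hpdom : InDomain Dm Dw p := ⟨hMdom, hWdom⟩
  have hp'dom : InDomain Dm Dw p' := by
    refine ⟨hMdom, ?_⟩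
    intro w
    show Function.update W i0 Q2 w ∈ Dw
    by_cases e : w = i0
    · rw [e, Function.update_self]; exact hQ2
    · rw [Function.update_of_ne e]; exact hWdom w
  have htdom : InDomain Dm Dw t := by
    refine ⟨?_, hWdom⟩
    intro m
    show Function.update M i1 P2 m ∈ Dm
    by_cases e : m = i1
    · rw [e, Function.update_self]; exact hP2
    · rw [Function.update_of_ne e]; exact hMdom m
  -- top properties for high indices
  have htop_p : ∀ i : Fin n, 3 ≤ (i : ℕ) → TopOf (p.1 i) i ∧ TopOf (p.2 i) i := by
    intro i hi
    constructor
    · show TopOf (M i) i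
      rw [hMhigh i hi]; exact hRtop i
    · show TopOf (W i) i
      rw [hWhigh i hi]; exact hStop i
  have htop_p' : ∀ i : Fin n, 3 ≤ (i : ℕ) → TopOf (p'.1 i) i ∧ TopOf (p'.2 i) i := by
    intro i hi
    constructor
    · show TopOf (M i) i
      rw [hMhigh i hi]; exact hRtop i
    · show TopOf (Function.update W i0 Q2 i) i
      rw [Function.update_of_ne (Fin.ne_of_val_ne (by omega)), hWhigh i hi]
      exact hStop i
  have htop_t : ∀ i : Fin n, 3 ≤ (i : ℕ) → TopOf (t.1 i) i ∧ TopOf (t.2 i) i := by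
    intro i hi
    constructor
    · show TopOf (Function.update M i1 P2 i) i
      rw [Function.update_of_ne (Fin.ne_of_val_ne (by omega)), hMhigh i hi]
      exact hRtop i
    · show TopOf (W i) i
      rw [hWhigh i hi]; exact hStop i
  -- stability and fixing
  have hstp := hst p hpdom
  have hfixp := aux11_fix p (φ p) hstp htop_p
  have hstp' := hst p' hp'dom
  have hfixp' := aux11_fix p' (φ p') hstp' htop_p'
  have hstt := hst t htdom
  have hfixt := aux11_fix t (φ t) hstt htop_t
  -- the two key uniqueness facts
  have hkey1 : φ p' i1 = i0 :=
    aux11_L1 hn p' (φ p') hstp' hfixp'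
      (show M i0 i1 i2 by rw [hM0]; exact h3.2)
      (show M i1 i0 i2 by rw [hM1]; exact h1.2)
      (show M i2 i0 i2 by rw [hM2]; exact trP3)
      (show Function.update W i0 Q2 i0 i2 i0 by rw [Function.update_self]; exact h5.2)
      (show Function.update W i0 Q2 i0 i1 i0 by rw [Function.update_self]; exact trQ2)
      (show Function.update W i0 Q2 i0 i1 i2 by rw [Function.update_self]; exact h5.1)
      (show Function.update W i0 Q2 i1 i0 i1 by
        rw [Function.update_of_ne ne10, hW1]; exact h6.1)
  have hkey2 : φ t i1 = i1 :=
    aux11_L2 hn t (φ t) hstt hfixt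
      (show Function.update M i1 P2 i1 i1 i2 by rw [Function.update_self]; exact h2.1)
      (show W i1 i1 i2 by rw [hW1]; exact h6.2)
      (show Function.update M i1 P2 i0 i0 i1 by
        rw [Function.update_of_ne ne01, hM0]; exact h3.1)
      (show W i0 i0 i2 by rw [hW0]; exact h4.2)
      (show Function.update M i1 P2 i1 i2 i0 by rw [Function.update_self]; exact h2.2)
      (show W i2 i1 i2 by rw [hW2]; exact h6.2)
      (show Function.update M i1 P2 i0 i1 i2 by
        rw [Function.update_of_ne ne01, hM0]; exact h3.2)
      (show W i1 i0 i2 by rw [hW1]; exact trQ3)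
  -- strategy-proofness at p
  obtain ⟨hspm, hspw⟩ := hsp p hpdom
  have hs1 : (φ p').symm i0 = i1 := (Equiv.symm_apply_eq (φ p')).mpr hkey1.symm
  -- step 1: woman w1 would manipulate via Q2 unless φ p matches her to m2
  have hy : (φ p).symm i0 = i1 := by
    by_contra hne
    have hylow : ((φ p).symm i0 : ℕ) < 3 := by
      by_contra hy3
      push_neg at hy3
      have h' := hfixp ((φ p).symm i0) hy3
      rw [Equiv.apply_symm_apply] at h'
      have hv := congrArg Fin.val h'
      omega
    have hvne : ((φ p).symm i0 : ℕ) ≠ 1 := fun h => hne (Fin.ext (by omega))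
    have hQf : Q1 i1 ((φ p).symm i0) := by
      rcases (show ((φ p).symm i0 : ℕ) = 0 ∨ ((φ p).symm i0 : ℕ) = 2 by omega) with h | h
      · rw [show (φ p).symm i0 = i0 from Fin.ext (by omega)]; exact h4.1
      · rw [show (φ p).symm i0 = i2 from Fin.ext (by omega)]; exact trQ1
    have hfinal : Q1 ((φ p').symm i0) ((φ p).symm i0) := by rw [hs1]; exact hQf
    exact hspw i0 Q2 hQ2 hfinal
  have hm1 : φ p i1 = i0 := ((Equiv.symm_apply_eq (φ p)).mp hy).symm
  -- step 2: man m2 manipulates via P2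
  have hfinal2 : P1 (φ t i1) (φ p i1) := by rw [hkey2, hm1]; exact h1.1
  exact hspm i1 P2 hP2 hfinal2
end
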